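/- arXiv:1503.00932 — 6 statements merged into one kernel-verified Lean document; each statement's English description precedes it below -/
import Mathlib

section
/- Let G be a smooth metric on an open set U ⊆ ℝ^d, V : U → ℝ a smooth nowhere-vanishing potential, and S a smooth symmetric 2-tensor field on U. Let ';' denote the covariant derivative with respect to the Christoffel symbols of G, and ';̄' the covariant derivative with respect to the Christoffel symbols of the scaled metric Ḡ_{αβ} = V G_{αβ}. Then the following are equivalent: (1) S_{(αβ;μ)} = −(V^{,σ}/V) S_{σ(μ} G_{αβ)} on U, where V^{,σ} = G^{σρ} ∂_ρ V (i.e. S is a conformal Killing tensor of G whose conformal factor ψ_μ = −S_{σμ} V^{,σ}/V satisfies S_{σμ} V^{,σ} + ψ_μ V = 0); (2) the tensor S̄_{αβ} = V² S_{αβ} is a Killing tensor of Ḡ, i.e. S̄_{(αβ;̄μ)} = 0 on U. -/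
open scoped BigOperators

noncomputable section

/-- Partial derivative `∂_σ f` at `x`. -/
def pderiv' {d : ℕ} (f : (Fin d → ℝ) → ℝ) (σ : Fin d) (x : Fin d → ℝ) : ℝ :=
  fderiv ℝ f x (Pi.single σ 1)

/-- Components `G^{αβ}` of the inverse metric. -/
def metricInv {d : ℕ} (G : (Fin d → ℝ) → Fin d → Fin d → ℝ) (x : Fin d → ℝ) :
    Fin d → Fin d → ℝ :=
  fun α β => (Matrix.of (G x))⁻¹ α β

/-- Christoffel symbols `Γ^α_{μν}` of the metric `G`. -/
def christoffel {d : ℕ} (G : (Fin d → ℝ) → Fin d → Fin d → ℝ) (x : Fin d → ℝ)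
    (α μ ν : Fin d) : ℝ :=
  (1/2) * ∑ σ, metricInv G x α σ *
    (pderiv' (fun y => G y σ ν) μ x + pderiv' (fun y => G y σ μ) ν x
      - pderiv' (fun y => G y μ ν) σ x)

/-- Lie derivative `(L_ξ G)_{αμ}` of a metric along a vector field. -/
def lieD {d : ℕ} (ξ : (Fin d → ℝ) → Fin d → ℝ) (G : (Fin d → ℝ) → Fin d → Fin d → ℝ)
    (x : Fin d → ℝ) (α μ : Fin d) : ℝ :=
  (∑ σ, ξ x σ * pderiv' (fun y => G y α μ) σ x)
  + (∑ σ, G x σ μ * pderiv' (fun y => ξ y σ) α x)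
  + (∑ σ, G x α σ * pderiv' (fun y => ξ y σ) μ x)

/-- Covariant derivative `S_{αβ;μ}` of a symmetric 2-tensor w.r.t. the metric `G`. -/
def covD {d : ℕ} (G S : (Fin d → ℝ) → Fin d → Fin d → ℝ) (x : Fin d → ℝ)
    (α β μ : Fin d) : ℝ :=
  pderiv' (fun y => S y α β) μ x - (∑ σ, christoffel G x σ α μ * S x σ β)
    - (∑ σ, christoffel G x σ β μ * S x α σ)

/-- Symmetrized covariant derivative `S_{(αβ;μ)}`. -/
def symCovD {d : ℕ} (G S : (Fin d → ℝ) → Fin d → Fin d → ℝ) (x : Fin d → ℝ)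
    (α β μ : Fin d) : ℝ :=
  (covD G S x α β μ + covD G S x β μ α + covD G S x μ α β) / 3



lemma pderiv'_mul {d : ℕ} {f g : (Fin d → ℝ) → ℝ} {x : Fin d → ℝ}
    (hf : DifferentiableAt ℝ f x) (hg : DifferentiableAt ℝ g x) (σ : Fin d) :
    pderiv' (fun y => f y * g y) σ x = pderiv' f σ x * g x + f x * pderiv' g σ x := by
  unfold pderiv'
  rw [fderiv_fun_mul hf hg]
  simp only [ContinuousLinearMap.add_apply, ContinuousLinearMap.smul_apply, smul_eq_mul]; ring

lemma metricInv_smul {d : ℕ} (G : (Fin d → ℝ) → Fin d → Fin d → ℝ)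
    (V : (Fin d → ℝ) → ℝ) (x : Fin d → ℝ)
    (hdet : (Matrix.of (G x)).det ≠ 0) (hv : V x ≠ 0) (α β : Fin d) :
    metricInv (fun y a b => V y * G y a b) x α β = (V x)⁻¹ * metricInv G x α β := by
  unfold metricInv
  have h1 : Matrix.of ((fun y a b => V y * G y a b) x) = (V x) • Matrix.of (G x) := rfl
  rw [h1]
  have h2 : ((V x) • Matrix.of (G x))⁻¹ = (V x)⁻¹ • (Matrix.of (G x))⁻¹ := by
    apply Matrix.inv_eq_right_inv
    rw [Matrix.smul_mul, Matrix.mul_smul, Matrix.mul_nonsing_inv _ (isUnit_iff_ne_zero.2 hdet),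
      smul_smul, mul_inv_cancel₀ hv, one_smul]
  rw [h2]
  rfl

lemma ginv_g {d : ℕ} (G : (Fin d → ℝ) → Fin d → Fin d → ℝ) (x : Fin d → ℝ)
    (hdet : (Matrix.of (G x)).det ≠ 0) (α ν : Fin d) :
    ∑ σ, metricInv G x α σ * G x σ ν = if α = ν then 1 else 0 := by
  have h := Matrix.nonsing_inv_mul (Matrix.of (G x)) (isUnit_iff_ne_zero.2 hdet)
  have h2 := congrFun (congrFun h α) ν
  simpa [Matrix.mul_apply, Matrix.one_apply, metricInv] using h2

lemma christoffel_smul {d : ℕ} (G : (Fin d → ℝ) → Fin d → Fin d → ℝ)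
    (V : (Fin d → ℝ) → ℝ) (x : Fin d → ℝ)
    (hdet : (Matrix.of (G x)).det ≠ 0) (hv : V x ≠ 0)
    (hVd : DifferentiableAt ℝ V x)
    (hGd : ∀ a b, DifferentiableAt ℝ (fun y => G y a b) x) (α μ ν : Fin d) :
    christoffel (fun y a b => V y * G y a b) x α μ ν =
      christoffel G x α μ ν + (1/(2*V x)) *
        ((if α = ν then 1 else 0) * pderiv' V μ x + (if α = μ then 1 else 0) * pderiv' V ν x
          - (∑ ρ, metricInv G x α ρ * pderiv' V ρ x) * G x μ ν) := by
  unfold christoffel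
  have key : ∀ σ : Fin d, metricInv (fun y a b => V y * G y a b) x α σ *
      (pderiv' (fun y => V y * G y σ ν) μ x + pderiv' (fun y => V y * G y σ μ) ν x
        - pderiv' (fun y => V y * G y μ ν) σ x)
      = metricInv G x α σ * (pderiv' (fun y => G y σ ν) μ x + pderiv' (fun y => G y σ μ) ν x
          - pderiv' (fun y => G y μ ν) σ x)
      + (V x)⁻¹ * (pderiv' V μ x * (metricInv G x α σ * G x σ ν)
          + pderiv' V ν x * (metricInv G x α σ * G x σ μ)
          - (metricInv G x α σ * pderiv' V σ x) * G x μ ν) := by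
    intro σ
    rw [metricInv_smul G V x hdet hv, pderiv'_mul hVd (hGd σ ν), pderiv'_mul hVd (hGd σ μ),
      pderiv'_mul hVd (hGd μ ν)]
    field_simp
    ring
  rw [Finset.sum_congr rfl (fun σ _ => key σ), Finset.sum_add_distrib]
  have hS2 : (∑ σ, (V x)⁻¹ * (pderiv' V μ x * (metricInv G x α σ * G x σ ν)
      + pderiv' V ν x * (metricInv G x α σ * G x σ μ)
      - (metricInv G x α σ * pderiv' V σ x) * G x μ ν))
      = (V x)⁻¹ * (pderiv' V μ x * (if α = ν then 1 else 0)
        + pderiv' V ν x * (if α = μ then 1 else 0)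
        - (∑ ρ, metricInv G x α ρ * pderiv' V ρ x) * G x μ ν) := by
    rw [← Finset.mul_sum]
    congr 1
    rw [Finset.sum_sub_distrib, Finset.sum_add_distrib, ← Finset.mul_sum, ← Finset.mul_sum,
      ← Finset.sum_mul, ginv_g G x hdet, ginv_g G x hdet]
  rw [hS2]
  ring

lemma sum_christoffel_smul {d : ℕ} (G : (Fin d → ℝ) → Fin d → Fin d → ℝ)
    (V : (Fin d → ℝ) → ℝ) (x : Fin d → ℝ)
    (hdet : (Matrix.of (G x)).det ≠ 0) (hv : V x ≠ 0)
    (hVd : DifferentiableAt ℝ V x)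
    (hGd : ∀ a b, DifferentiableAt ℝ (fun y => G y a b) x)
    (a m : Fin d) (T : Fin d → ℝ) :
    ∑ σ, christoffel (fun y a b => V y * G y a b) x σ a m * ((V x)^2 * T σ)
    = (V x)^2 * (∑ σ, christoffel G x σ a m * T σ)
      + (V x/2) * (pderiv' V a x * T m + pderiv' V m x * T a
          - G x a m * ∑ σ, (∑ ρ, metricInv G x σ ρ * pderiv' V ρ x) * T σ) := by
  have e : ∀ σ : Fin d, christoffel (fun y a b => V y * G y a b) x σ a m * ((V x)^2 * T σ)
      = (V x)^2 * (christoffel G x σ a m * T σ)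
        + (V x/2) * ((if σ = m then pderiv' V a x * T σ else 0)
          + (if σ = a then pderiv' V m x * T σ else 0)
          - G x a m * ((∑ ρ, metricInv G x σ ρ * pderiv' V ρ x) * T σ)) := by
    intro σ
    rw [christoffel_smul G V x hdet hv hVd hGd]
    simp only [mul_ite, ite_mul, mul_zero, zero_mul, mul_one, one_mul]
    split_ifs <;> (field_simp <;> ring)
  rw [Finset.sum_congr rfl (fun σ _ => e σ), Finset.sum_add_distrib, ← Finset.mul_sum,
    ← Finset.mul_sum]
  congr 1
  rw [Finset.sum_sub_distrib, Finset.sum_add_distrib, Finset.sum_ite_eq' , Finset.sum_ite_eq',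
    ← Finset.mul_sum]
  simp

lemma covD_smul {d : ℕ} (G S : (Fin d → ℝ) → Fin d → Fin d → ℝ)
    (V : (Fin d → ℝ) → ℝ) (x : Fin d → ℝ)
    (hdet : (Matrix.of (G x)).det ≠ 0) (hv : V x ≠ 0)
    (hVd : DifferentiableAt ℝ V x)
    (hGd : ∀ a b, DifferentiableAt ℝ (fun y => G y a b) x)
    (hSd : ∀ a b, DifferentiableAt ℝ (fun y => S y a b) x)
    (α β μ : Fin d) :
    covD (fun y a b => V y * G y a b) (fun y a b => (V y)^2 * S y a b) x α β μ
    = (V x)^2 * covD G S x α β μ + V x * pderiv' V μ x * S x α β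
      - (V x/2) * (pderiv' V α x * S x μ β + pderiv' V β x * S x α μ)
      + (V x/2) * (G x α μ * ∑ σ, (∑ ρ, metricInv G x σ ρ * pderiv' V ρ x) * S x σ β
          + G x β μ * ∑ σ, (∑ ρ, metricInv G x σ ρ * pderiv' V ρ x) * S x α σ) := by
  have expand : covD (fun y a b => V y * G y a b) (fun y a b => (V y)^2 * S y a b) x α β μ
      = pderiv' (fun y => (V y)^2 * S y α β) μ x
        - (∑ σ, christoffel (fun y a b => V y * G y a b) x σ α μ * ((V x)^2 * S x σ β))
        - (∑ σ, christoffel (fun y a b => V y * G y a b) x σ β μ * ((V x)^2 * S x α σ)) := rfl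
  have expandG : covD G S x α β μ
      = pderiv' (fun y => S y α β) μ x - (∑ σ, christoffel G x σ α μ * S x σ β)
        - (∑ σ, christoffel G x σ β μ * S x α σ) := rfl
  have hp : pderiv' (fun y => (V y)^2 * S y α β) μ x
      = 2 * V x * pderiv' V μ x * S x α β + (V x)^2 * pderiv' (fun y => S y α β) μ x := by
    have h1 : (fun y => (V y)^2 * S y α β) = fun y => (V y * V y) * S y α β := by
      funext y; ring
    rw [h1, pderiv'_mul (f := fun y => V y * V y) (hVd.mul hVd) (hSd α β), pderiv'_mul hVd hVd]
    ring
  have k1 : (∑ σ, christoffel (fun y a b => V y * G y a b) x σ α μ * ((V x)^2 * S x σ β))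
      = (V x)^2 * (∑ σ, christoffel G x σ α μ * S x σ β)
        + (V x/2) * (pderiv' V α x * S x μ β + pderiv' V μ x * S x α β
            - G x α μ * ∑ σ, (∑ ρ, metricInv G x σ ρ * pderiv' V ρ x) * S x σ β) :=
    sum_christoffel_smul G V x hdet hv hVd hGd α μ (fun σ => S x σ β)
  have k2 : (∑ σ, christoffel (fun y a b => V y * G y a b) x σ β μ * ((V x)^2 * S x α σ))
      = (V x)^2 * (∑ σ, christoffel G x σ β μ * S x α σ)
        + (V x/2) * (pderiv' V β x * S x α μ + pderiv' V μ x * S x α β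
            - G x β μ * ∑ σ, (∑ ρ, metricInv G x σ ρ * pderiv' V ρ x) * S x α σ) :=
    sum_christoffel_smul G V x hdet hv hVd hGd β μ (fun σ => S x α σ)
  rw [expand, expandG, hp, k1, k2]
  ring

/-- For a smooth metric `G`, a smooth nowhere-vanishing potential `V` and a
smooth symmetric 2-tensor `S` on an open set `U ⊆ ℝ^d`, the conformal Killing tensor condition
`S_{(αβ;μ)} = −(V^{,σ}/V) S_{σ(μ} G_{αβ)}` on `U` is equivalent to `S̄ = V² S` being a Killing
tensor of the scaled metric `Ḡ = V G`, i.e. `S̄_{(αβ;̄μ)} = 0` on `U`. -/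
theorem conformal_killing_tensor_iff_killing_tensor_of_scaled_metric
    {d : ℕ} (U : Set (Fin d → ℝ)) (hU : IsOpen U)
    (G : (Fin d → ℝ) → Fin d → Fin d → ℝ)
    (V : (Fin d → ℝ) → ℝ)
    (S : (Fin d → ℝ) → Fin d → Fin d → ℝ)
    (hG : ∀ α μ, ContDiffOn ℝ (⊤ : ℕ∞) (fun x => G x α μ) U)
    (hGsymm : ∀ x ∈ U, ∀ α μ, G x α μ = G x μ α)
    (hGinv : ∀ x ∈ U, (Matrix.of (G x)).det ≠ 0)
    (hV : ContDiffOn ℝ (⊤ : ℕ∞) V U)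
    (hV0 : ∀ x ∈ U, V x ≠ 0)
    (hS : ∀ α μ, ContDiffOn ℝ (⊤ : ℕ∞) (fun x => S x α μ) U)
    (hSsymm : ∀ x ∈ U, ∀ α μ, S x α μ = S x μ α) :
    (∀ x ∈ U, ∀ α β μ, symCovD G S x α β μ =
        -(1 / V x) * (((∑ σ, (∑ ρ, metricInv G x σ ρ * pderiv' V ρ x) * S x σ μ) * G x α β
          + (∑ σ, (∑ ρ, metricInv G x σ ρ * pderiv' V ρ x) * S x σ α) * G x β μ
          + (∑ σ, (∑ ρ, metricInv G x σ ρ * pderiv' V ρ x) * S x σ β) * G x μ α) / 3)) ↔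
    (∀ x ∈ U, ∀ α β μ,
        symCovD (fun y a b => V y * G y a b) (fun y a b => (V y)^2 * S y a b) x α β μ = 0) := by
  have main : ∀ x ∈ U, ∀ α β μ : Fin d,
      symCovD (fun y a b => V y * G y a b) (fun y a b => (V y)^2 * S y a b) x α β μ
      = (V x)^2 * (symCovD G S x α β μ -
          (-(1 / V x) * (((∑ σ, (∑ ρ, metricInv G x σ ρ * pderiv' V ρ x) * S x σ μ) * G x α β
            + (∑ σ, (∑ ρ, metricInv G x σ ρ * pderiv' V ρ x) * S x σ α) * G x β μ
            + (∑ σ, (∑ ρ, metricInv G x σ ρ * pderiv' V ρ x) * S x σ β) * G x μ α) / 3))) := by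
    intro x hx α β μ
    have hdet := hGinv x hx
    have hv := hV0 x hx
    have hVd : DifferentiableAt ℝ V x := (hV.contDiffAt (hU.mem_nhds hx)).differentiableAt (by simp)
    have hGd : ∀ a b, DifferentiableAt ℝ (fun y => G y a b) x := fun a b =>
      ((hG a b).contDiffAt (hU.mem_nhds hx)).differentiableAt (by simp)
    have hSd : ∀ a b, DifferentiableAt ℝ (fun y => S y a b) x := fun a b =>
      ((hS a b).contDiffAt (hU.mem_nhds hx)).differentiableAt (by simp)
    have hsB : ∀ a : Fin d, (∑ σ, (∑ ρ, metricInv G x σ ρ * pderiv' V ρ x) * S x a σ)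
        = ∑ σ, (∑ ρ, metricInv G x σ ρ * pderiv' V ρ x) * S x σ a :=
      fun a => Finset.sum_congr rfl fun σ _ => by rw [hSsymm x hx a σ]
    unfold symCovD
    rw [covD_smul G S V x hdet hv hVd hGd hSd α β μ,
      covD_smul G S V x hdet hv hVd hGd hSd β μ α,
      covD_smul G S V x hdet hv hVd hGd hSd μ α β,
      hsB α, hsB β, hsB μ,
      hSsymm x hx β α, hSsymm x hx μ α, hSsymm x hx μ β,
      hGsymm x hx β α, hGsymm x hx μ β, hGsymm x hx α μ]
    field_simp
    ring
  constructor
  · intro h x hx α β μ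
    rw [main x hx α β μ, h x hx α β μ, sub_self, mul_zero]
  · intro h x hx α β μ
    have hb := h x hx α β μ
    rw [main x hx α β μ] at hb
    rcases mul_eq_zero.mp hb with h1 | h1
    · exact absurd h1 (pow_ne_zero 2 (hV0 x hx))
    · exact sub_eq_zero.mp h1


end
end

section
/- Let G be a smooth metric and V a smooth potential on an open set U ⊆ ℝ^d, and let S be a smooth symmetric 2-tensor field and ψ a smooth covector field on U satisfying the conformal Killing tensor condition S_{(αβ;μ)} = ψ_{(μ} G_{αβ)} together with S_{σμ} V^{,σ} + ψ_μ V = 0, where V^{,σ} = G^{σρ} ∂_ρ V. Let q : I → U and N : I → (0,∞) be smooth functions of t on an interval I satisfying both the constraint (1/(2N²)) G_{μν}(q) q̇^μ q̇^ν + V(q) = 0 and the evolution equations q̈^α + Γ^α_{μν}(q) q̇^μ q̇^ν − (Ṅ/N) q̇^α + N² G^{αμ}(q) ∂_μ V(q) = 0. Then the quantity Q(t) = S^{αβ}(q(t)) p_α(t) p_β(t) is constant on I, where p_α = (1/N) G_{αβ}(q) q̇^β and S^{αβ} = G^{αμ} G^{βν} S_{μν} (equivalently, Q = (1/N²) S_{μν}(q)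 q̇^μ q̇^ν). -/
open scoped BigOperators

noncomputable section

lemma clm_apply_eq_sum' {d : ℕ} (L : (Fin d → ℝ) →L[ℝ] ℝ) (v : Fin d → ℝ) :
    L v = ∑ σ, v σ * L (Pi.single σ 1) := by
  have hv : v = ∑ σ : Fin d, v σ • (Pi.single σ (1:ℝ) : Fin d → ℝ) := by
    funext j
    rw [Finset.sum_apply]
    simp [Pi.single_apply, Finset.sum_ite_eq', mul_comm]
  conv_lhs => rw [hv, map_sum]
  simp

lemma hasDerivAt_comp_sum' {d : ℕ} {U : Set (Fin d → ℝ)} (hU : IsOpen U)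
    {f : (Fin d → ℝ) → ℝ} (hf : ContDiffOn ℝ (⊤ : ℕ∞) f U)
    {q : ℝ → (Fin d → ℝ)} {v : Fin d → ℝ} {t : ℝ} (hqd : HasDerivAt q v t)
    (hx : q t ∈ U) :
    HasDerivAt (fun s => f (q s)) (∑ σ, v σ * pderiv' f σ (q t)) t := by
  have hfd : DifferentiableAt ℝ f (q t) :=
    (hf.contDiffAt (hU.mem_nhds hx)).differentiableAt (by simp)
  have h := hfd.hasFDerivAt.comp_hasDerivAt t hqd
  simp [Function.comp, clm_apply_eq_sum' (fderiv ℝ f (q t)) v, pderiv'] at h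
  exact h

lemma contract_cycle' {d : ℕ} (f : Fin d → Fin d → Fin d → ℝ) (v : Fin d → ℝ) :
    ∑ α, ∑ β, ∑ μ, f β μ α * v α * v β * v μ
      = ∑ α, ∑ β, ∑ μ, f α β μ * v α * v β * v μ := by
  calc ∑ α, ∑ β, ∑ μ, f β μ α * v α * v β * v μ
      = ∑ β, ∑ α, ∑ μ, f β μ α * v α * v β * v μ := Finset.sum_comm
    _ = ∑ β, ∑ μ, ∑ α, f β μ α * v α * v β * v μ :=
        Finset.sum_congr rfl fun _ _ => Finset.sum_comm
    _ = ∑ α, ∑ β, ∑ μ, f α β μ * v α * v β * v μ := by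
        refine Finset.sum_congr rfl fun α _ => Finset.sum_congr rfl fun β _ =>
          Finset.sum_congr rfl fun μ _ => ?_
        ring

lemma sum3_factor' {d : ℕ} (w : Fin d → ℝ) (g : Fin d → Fin d → ℝ) (v : Fin d → ℝ) :
    ∑ α, ∑ β, ∑ μ, w μ * g α β * v α * v β * v μ
      = (∑ μ, w μ * v μ) * (∑ α, ∑ β, g α β * v α * v β) := by
  have h : ∀ α β, ∑ μ, w μ * g α β * v α * v β * v μ
      = (∑ μ, w μ * v μ) * (g α β * v α * v β) := by
    intro α β
    rw [Finset.sum_mul]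
    exact Finset.sum_congr rfl fun μ _ => by ring
  calc ∑ α, ∑ β, ∑ μ, w μ * g α β * v α * v β * v μ
      = ∑ α, ∑ β, (∑ μ, w μ * v μ) * (g α β * v α * v β) :=
        Finset.sum_congr rfl fun α _ => Finset.sum_congr rfl fun β _ => h α β
    _ = (∑ μ, w μ * v μ) * (∑ α, ∑ β, g α β * v α * v β) := by
        rw [Finset.mul_sum]
        exact Finset.sum_congr rfl fun α _ => (Finset.mul_sum _ _ _).symm

lemma sum4_reorder' {d : ℕ} (f : Fin d → Fin d → Fin d → Fin d → ℝ) :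
    ∑ α, ∑ β, ∑ μ, ∑ σ, f α β μ σ = ∑ σ, ∑ α, ∑ μ, ∑ β, f α β μ σ := by
  calc ∑ α, ∑ β, ∑ μ, ∑ σ, f α β μ σ
      = ∑ α, ∑ β, ∑ σ, ∑ μ, f α β μ σ :=
        Finset.sum_congr rfl fun _ _ => Finset.sum_congr rfl fun _ _ => Finset.sum_comm
    _ = ∑ α, ∑ σ, ∑ β, ∑ μ, f α β μ σ :=
        Finset.sum_congr rfl fun _ _ => Finset.sum_comm
    _ = ∑ σ, ∑ α, ∑ β, ∑ μ, f α β μ σ := Finset.sum_comm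
    _ = ∑ σ, ∑ α, ∑ μ, ∑ β, f α β μ σ :=
        Finset.sum_congr rfl fun _ _ => Finset.sum_congr rfl fun _ _ => Finset.sum_comm
/-- If `S` is a conformal Killing tensor of `G` with
`S_{(αβ;μ)} = ψ_{(μ} G_{αβ)}` and `S_{σμ} V^{,σ} + ψ_μ V = 0`, then along any solution
`(q, N)` of the constrained Euler–Lagrange equations the quantity
`Q = S^{αβ} p_α p_β = (1/N²) S_{μν} q̇^μ q̇^ν` is conserved. -/
theorem quadratic_integral_of_motion_of_conformal_killing_tensor
    {d : ℕ} (U : Set (Fin d → ℝ)) (hU : IsOpen U)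
    (G : (Fin d → ℝ) → Fin d → Fin d → ℝ)
    (V : (Fin d → ℝ) → ℝ)
    (S : (Fin d → ℝ) → Fin d → Fin d → ℝ)
    (ψ : (Fin d → ℝ) → Fin d → ℝ)
    (hG : ∀ α μ, ContDiffOn ℝ (⊤ : ℕ∞) (fun x => G x α μ) U)
    (hGsymm : ∀ x ∈ U, ∀ α μ, G x α μ = G x μ α)
    (hGinv : ∀ x ∈ U, (Matrix.of (G x)).det ≠ 0)
    (hV : ContDiffOn ℝ (⊤ : ℕ∞) V U)
    (hS : ∀ α μ, ContDiffOn ℝ (⊤ : ℕ∞) (fun x => S x α μ) U)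
    (hSsymm : ∀ x ∈ U, ∀ α μ, S x α μ = S x μ α)
    (hψ : ∀ μ, ContDiffOn ℝ (⊤ : ℕ∞) (fun x => ψ x μ) U)
    -- the conformal Killing tensor condition `S_{(αβ;μ)} = ψ_{(μ} G_{αβ)}`
    (hCKT : ∀ x ∈ U, ∀ α β μ, symCovD G S x α β μ =
        (ψ x μ * G x α β + ψ x α * G x β μ + ψ x β * G x μ α) / 3)
    -- the condition `S_{σμ} V^{,σ} + ψ_μ V = 0`
    (hSV : ∀ x ∈ U, ∀ μ,
        (∑ σ, S x σ μ * (∑ ρ, metricInv G x σ ρ * pderiv' V ρ x)) + ψ x μ * V x = 0)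
    -- the solution `(q, N)` on an interval `I`
    (I : Set ℝ) (hI : IsOpen I) (hIconn : I.OrdConnected)
    (q : ℝ → (Fin d → ℝ)) (N : ℝ → ℝ)
    (hq : ContDiffOn ℝ (⊤ : ℕ∞) q I) (hN : ContDiffOn ℝ (⊤ : ℕ∞) N I)
    (hqU : ∀ t ∈ I, q t ∈ U) (hNpos : ∀ t ∈ I, 0 < N t)
    -- the Hamiltonian constraint
    (hconstraint : ∀ t ∈ I,
        (1 / (2 * (N t)^2)) * (∑ μ, ∑ ν, G (q t) μ ν * deriv q t μ * deriv q t ν)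
          + V (q t) = 0)
    -- the evolution equations
    (heom : ∀ t ∈ I, ∀ α,
        deriv (deriv q) t α
          + (∑ μ, ∑ ν, christoffel G (q t) α μ ν * deriv q t μ * deriv q t ν)
          - (deriv N t / N t) * deriv q t α
          + (N t)^2 * (∑ μ, metricInv G (q t) α μ * pderiv' V μ (q t)) = 0) :
    ∀ t₁ ∈ I, ∀ t₂ ∈ I,
      (1 / (N t₁)^2) * (∑ μ, ∑ ν, S (q t₁) μ ν * deriv q t₁ μ * deriv q t₁ ν) =
      (1 / (N t₂)^2) * (∑ μ, ∑ ν, S (q t₂) μ ν * deriv q t₂ μ * deriv q t₂ ν) := by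
  intro t₁ ht₁ t₂ ht₂
  have hconv : Convex ℝ I := convex_iff_ordConnected.mpr hIconn
  have key : ∀ t ∈ I, HasDerivAt
      (fun s => (N s ^ 2)⁻¹ * ∑ μ, ∑ ν, S (q s) μ ν * deriv q s μ * deriv q s ν) 0 t := by
    intro t ht
    have hxU : q t ∈ U := hqU t ht
    have hqd : HasDerivAt q (deriv q t) t :=
      ((hq.contDiffAt (hI.mem_nhds ht)).differentiableAt (by simp)).hasDerivAt
    have hdq : ContDiffOn ℝ (⊤ : ℕ∞) (deriv q) I := hq.deriv_of_isOpen hI (by simp)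
    have hqdd : HasDerivAt (deriv q) (deriv (deriv q) t) t :=
      ((hdq.contDiffAt (hI.mem_nhds ht)).differentiableAt (by simp)).hasDerivAt
    have ha : ∀ μ, HasDerivAt (fun s => deriv q s μ) (deriv (deriv q) t μ) t :=
      fun μ => hasDerivAt_pi.1 hqdd μ
    have hNd : HasDerivAt N (deriv N t) t :=
      ((hN.contDiffAt (hI.mem_nhds ht)).differentiableAt (by simp)).hasDerivAt
    have hn0 : N t ≠ 0 := ne_of_gt (hNpos t ht)
    have hSd : ∀ μ ν, HasDerivAt (fun s => S (q s) μ ν)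
        (∑ σ, deriv q t σ * pderiv' (fun y => S y μ ν) σ (q t)) t :=
      fun μ ν => hasDerivAt_comp_sum' hU (hS μ ν) hqd hxU
    have hcon := hconstraint t ht
    have heq := heom t ht
    set x := q t with hxdef
    set v := deriv q t with hvdef
    set a := deriv (deriv q) t with hadef
    set n := N t with hndef
    set n' := deriv N t with hn'def
    -- named scalar quantities
    set At := ∑ μ, ∑ ν, S x μ ν * v μ * v ν with hAtdef
    set P := ∑ σ, ψ x σ * v σ with hPdef
    set Gvv := ∑ μ, ∑ ν, G x μ ν * v μ * v ν with hGvvdef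
    set T := ∑ σ, (∑ α, ∑ β, christoffel G x σ α β * v α * v β) * (∑ β, S x σ β * v β)
      with hTdef
    set DS := ∑ μ, ∑ ν, (∑ σ, v σ * pderiv' (fun y => S y μ ν) σ x) * v μ * v ν with hDSdef
    set SA := ∑ μ, ∑ ν, S x μ ν * a μ * v ν with hSAdef
    set SVA := ∑ μ, ∑ ν, S x μ ν * v μ * a ν with hSVAdef
    set D3 := ∑ α, ∑ β, ∑ μ, pderiv' (fun y => S y α β) μ x * v α * v β * v μ with hD3def
    set T1 := ∑ α, ∑ β, ∑ μ, (∑ σ, christoffel G x σ α μ * S x σ β) * v α * v β * v μ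
      with hT1def
    set T2 := ∑ α, ∑ β, ∑ μ, (∑ σ, christoffel G x σ β μ * S x α σ) * v α * v β * v μ
      with hT2def
    set Ccov := ∑ α, ∑ β, ∑ μ, covD G S x α β μ * v α * v β * v μ with hCcovdef
    -- the equation of motion, solved for the acceleration
    have ha_eq : ∀ α, a α = -(∑ μ, ∑ ν, christoffel G x α μ ν * v μ * v ν)
        + n' / n * v α - n ^ 2 * (∑ μ, metricInv G x α μ * pderiv' V μ x) := by
      intro α
      have h := heq α
      linarith
    -- the constraint, solved for G(v,v)
    have hGvv : Gvv = -2 * n ^ 2 * V x := by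
      have h2 : (2:ℝ) * n ^ 2 ≠ 0 := by positivity
      field_simp at hcon
      linarith
    -- derivative facts for the quantity
    have hA : HasDerivAt (fun s => ∑ μ, ∑ ν, S (q s) μ ν * deriv q s μ * deriv q s ν)
        (∑ μ, ∑ ν, (((∑ σ, v σ * pderiv' (fun y => S y μ ν) σ x) * v μ + S x μ ν * a μ) * v ν
          + S x μ ν * v μ * a ν)) t := by
      refine HasDerivAt.fun_sum fun μ _ => ?_
      refine HasDerivAt.fun_sum fun ν _ => ?_
      exact ((hSd μ ν).mul (ha μ)).mul (ha ν)
    have hinv : HasDerivAt (fun s => (N s ^ 2)⁻¹) (-(2 * n * n') / n ^ 4) t := by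
      have h : HasDerivAt (fun s => (N s ^ 2)⁻¹) _ t := (hNd.pow 2).inv (pow_ne_zero 2 hn0)
      convert h using 1
      push_cast
      simp only [Pi.pow_apply, ← hndef]
      ring
    have hQ0 : HasDerivAt
        (fun s => (N s ^ 2)⁻¹ * ∑ μ, ∑ ν, S (q s) μ ν * deriv q s μ * deriv q s ν)
        (-(2 * n * n') / n ^ 4 * At
          + (n ^ 2)⁻¹ * (∑ μ, ∑ ν, (((∑ σ, v σ * pderiv' (fun y => S y μ ν) σ x) * v μ
              + S x μ ν * a μ) * v ν + S x μ ν * v μ * a ν))) t := hinv.mul hA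
    -- now the algebra: the derivative value is zero
    have hsplit : (∑ μ, ∑ ν, (((∑ σ, v σ * pderiv' (fun y => S y μ ν) σ x) * v μ
        + S x μ ν * a μ) * v ν + S x μ ν * v μ * a ν)) = DS + SA + SVA := by
      rw [hDSdef, hSAdef, hSVAdef]
      simp only [add_mul, Finset.sum_add_distrib]
    -- SVA = SA by symmetry of S
    have hSVA : SVA = SA := by
      rw [hSVAdef, hSAdef, Finset.sum_comm]
      refine Finset.sum_congr rfl fun μ _ => Finset.sum_congr rfl fun ν _ => ?_
      rw [hSsymm x hxU ν μ]
      ring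
    -- S contracted with the potential-gradient term
    have hSW : (∑ μ, ∑ ν, S x μ ν * (∑ ρ, metricInv G x μ ρ * pderiv' V ρ x) * v ν)
        = -(V x * P) := by
      rw [Finset.sum_comm]
      have h1 : ∀ ν, (∑ μ, S x μ ν * (∑ ρ, metricInv G x μ ρ * pderiv' V ρ x) * v ν)
          = -(ψ x ν * V x) * v ν := by
        intro ν
        have h := hSV x hxU ν
        calc (∑ μ, S x μ ν * (∑ ρ, metricInv G x μ ρ * pderiv' V ρ x) * v ν)
            = (∑ μ, S x μ ν * (∑ ρ, metricInv G x μ ρ * pderiv' V ρ x)) * v ν :=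
              (Finset.sum_mul _ _ _).symm
          _ = -(ψ x ν * V x) * v ν := by
              rw [show (∑ μ, S x μ ν * (∑ ρ, metricInv G x μ ρ * pderiv' V ρ x))
                = -(ψ x ν * V x) from by linarith]
      rw [Finset.sum_congr rfl fun ν _ => h1 ν, hPdef, Finset.mul_sum,
        ← Finset.sum_neg_distrib]
      exact Finset.sum_congr rfl fun ν _ => by ring
    -- S contracted with the Christoffel term
    have hSF : (∑ μ, ∑ ν, S x μ ν * (∑ α, ∑ β, christoffel G x μ α β * v α * v β) * v ν)
        = T := by
      rw [hTdef]
      refine Finset.sum_congr rfl fun μ _ => ?_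
      rw [Finset.mul_sum]
      exact Finset.sum_congr rfl fun ν _ => by ring
    -- SA in closed form
    have hSA : SA = -T + n' / n * At + n ^ 2 * (V x * P) := by
      rw [hSAdef]
      calc (∑ μ, ∑ ν, S x μ ν * a μ * v ν)
          = ∑ μ, ∑ ν,
              (-(S x μ ν * (∑ α, ∑ β, christoffel G x μ α β * v α * v β) * v ν)
              + n' / n * (S x μ ν * v μ * v ν)
              - n ^ 2 * (S x μ ν * (∑ ρ, metricInv G x μ ρ * pderiv' V ρ x) * v ν)) := by
            refine Finset.sum_congr rfl fun μ _ => Finset.sum_congr rfl fun ν _ => ?_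
            rw [ha_eq μ]
            ring
        _ = -(∑ μ, ∑ ν, S x μ ν * (∑ α, ∑ β, christoffel G x μ α β * v α * v β) * v ν)
            + n' / n * (∑ μ, ∑ ν, S x μ ν * v μ * v ν)
            - n ^ 2 * (∑ μ, ∑ ν, S x μ ν * (∑ ρ, metricInv G x μ ρ * pderiv' V ρ x) * v ν)
            := by
            simp only [Finset.sum_add_distrib, Finset.sum_sub_distrib,
              Finset.sum_neg_distrib, ← Finset.mul_sum]
        _ = -T + n' / n * At + n ^ 2 * (V x * P) := by
            rw [hSF, hSW, ← hAtdef]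
            ring
    -- the covariant derivative contraction
    have hCcov : Ccov = D3 - T1 - T2 := by
      rw [hCcovdef, hD3def, hT1def, hT2def]
      simp only [covD, sub_mul, Finset.sum_sub_distrib]
    have hTexp : T = ∑ σ, ∑ α, ∑ μ, ∑ β,
        christoffel G x σ α μ * S x σ β * v α * v β * v μ := by
      rw [hTdef]
      refine Finset.sum_congr rfl fun σ _ => ?_
      rw [Finset.sum_mul]
      refine Finset.sum_congr rfl fun α _ => ?_
      rw [Finset.sum_mul]
      refine Finset.sum_congr rfl fun μ _ => ?_
      rw [Finset.mul_sum]
      exact Finset.sum_congr rfl fun β _ => by ring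
    have hT1 : T1 = T := by
      have h4 : (∑ α, ∑ β, ∑ μ, ∑ σ, christoffel G x σ α μ * S x σ β * v α * v β * v μ)
          = ∑ σ, ∑ α, ∑ μ, ∑ β, christoffel G x σ α μ * S x σ β * v α * v β * v μ :=
        sum4_reorder' (fun α β μ σ => christoffel G x σ α μ * S x σ β * v α * v β * v μ)
      rw [hTexp, ← h4, hT1def]
      refine Finset.sum_congr rfl fun α _ => Finset.sum_congr rfl fun β _ =>
        Finset.sum_congr rfl fun μ _ => ?_
      rw [Finset.sum_mul, Finset.sum_mul, Finset.sum_mul]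
    have hT2 : T2 = T1 := by
      rw [hT2def, hT1def, Finset.sum_comm]
      refine Finset.sum_congr rfl fun α _ => Finset.sum_congr rfl fun β _ =>
        Finset.sum_congr rfl fun μ _ => ?_
      rw [show (∑ σ, christoffel G x σ α μ * S x β σ)
          = ∑ σ, christoffel G x σ α μ * S x σ β from
        Finset.sum_congr rfl fun σ _ => by rw [hSsymm x hxU β σ]]
      ring
    -- the CKT condition contracted
    have hcyc : ∀ α β μ, covD G S x α β μ + covD G S x β μ α + covD G S x μ α β
        = ψ x μ * G x α β + ψ x α * G x β μ + ψ x β * G x μ α := by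
      intro α β μ
      have h := hCKT x hxU α β μ
      simp only [symCovD] at h
      linarith
    have e1 : (∑ α, ∑ β, ∑ μ, covD G S x β μ α * v α * v β * v μ) = Ccov := by
      rw [hCcovdef]
      exact contract_cycle' (covD G S x) v
    have e2 : (∑ α, ∑ β, ∑ μ, covD G S x μ α β * v α * v β * v μ) = Ccov := by
      have h : (∑ α, ∑ β, ∑ μ, covD G S x μ α β * v α * v β * v μ)
          = ∑ α, ∑ β, ∑ μ, covD G S x β μ α * v α * v β * v μ :=
        contract_cycle' (fun p q r => covD G S x q r p) v
      rw [h, e1]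
    have g1 : (∑ α, ∑ β, ∑ μ, ψ x μ * G x α β * v α * v β * v μ) = P * Gvv := by
      rw [hPdef, hGvvdef]
      exact sum3_factor' (ψ x) (G x) v
    have g2 : (∑ α, ∑ β, ∑ μ, ψ x α * G x β μ * v α * v β * v μ) = P * Gvv := by
      have h : (∑ α, ∑ β, ∑ μ, ψ x α * G x β μ * v α * v β * v μ)
          = ∑ α, ∑ β, ∑ μ, ψ x μ * G x α β * v α * v β * v μ :=
        contract_cycle' (fun p q r => ψ x r * G x p q) v
      rw [h, g1]
    have g3 : (∑ α, ∑ β, ∑ μ, ψ x β * G x μ α * v α * v β * v μ) = P * Gvv := by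
      have h : (∑ α, ∑ β, ∑ μ, ψ x β * G x μ α * v α * v β * v μ)
          = ∑ α, ∑ β, ∑ μ, ψ x α * G x β μ * v α * v β * v μ :=
        contract_cycle' (fun p q r => ψ x p * G x q r) v
      rw [h, g2]
    have hsum3 : (∑ α, ∑ β, ∑ μ,
        (covD G S x α β μ + covD G S x β μ α + covD G S x μ α β) * v α * v β * v μ)
        = ∑ α, ∑ β, ∑ μ,
          (ψ x μ * G x α β + ψ x α * G x β μ + ψ x β * G x μ α) * v α * v β * v μ := by
      refine Finset.sum_congr rfl fun α _ => Finset.sum_congr rfl fun β _ =>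
        Finset.sum_congr rfl fun μ _ => ?_
      rw [hcyc α β μ]
    have hCval : Ccov = P * Gvv := by
      simp only [add_mul, Finset.sum_add_distrib] at hsum3
      rw [e1, e2, g1, g2, g3] at hsum3
      rw [hCcovdef] at hsum3 ⊢
      linarith
    -- DS in closed form
    have hDSmain : DS = D3 := by
      rw [hDSdef, hD3def]
      refine Finset.sum_congr rfl fun μ _ => Finset.sum_congr rfl fun ν _ => ?_
      rw [Finset.sum_mul, Finset.sum_mul]
      exact Finset.sum_congr rfl fun σ _ => by ring
    have hDS : DS = P * (-2 * n ^ 2 * V x) + 2 * T := by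
      have h1 : DS = Ccov + T1 + T2 := by
        rw [hDSmain]
        linarith [hCcov]
      rw [h1, hT2, hT1, hCval, hGvv]
      ring
    -- assemble
    have hval : (-(2 * n * n') / n ^ 4 * At
        + (n ^ 2)⁻¹ * (∑ μ, ∑ ν, (((∑ σ, v σ * pderiv' (fun y => S y μ ν) σ x) * v μ
            + S x μ ν * a μ) * v ν + S x μ ν * v μ * a ν))) = 0 := by
      rw [hsplit, hDS, hSVA, hSA]
      field_simp
      ring
    exact hval ▸ hQ0
  -- conclude constancy on the convex set I
  have hdiff : DifferentiableOn ℝ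
      (fun s => (N s ^ 2)⁻¹ * ∑ μ, ∑ ν, S (q s) μ ν * deriv q s μ * deriv q s ν) I :=
    fun s hs => ((key s hs).differentiableAt).differentiableWithinAt
  have hfz : ∀ s ∈ I, fderivWithin ℝ
      (fun s => (N s ^ 2)⁻¹ * ∑ μ, ∑ ν, S (q s) μ ν * deriv q s μ * deriv q s ν) I s = 0 := by
    intro s hs
    have h := (key s hs).hasFDerivAt.hasFDerivWithinAt.fderivWithin (hI.uniqueDiffWithinAt hs)
    rw [h]
    ext
    simp
  have hconst := hconv.is_const_of_fderivWithin_eq_zero hdiff hfz ht₁ ht₂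
  have hc : (N t₁ ^ 2)⁻¹ * (∑ μ, ∑ ν, S (q t₁) μ ν * deriv q t₁ μ * deriv q t₁ ν)
      = (N t₂ ^ 2)⁻¹ * (∑ μ, ∑ ν, S (q t₂) μ ν * deriv q t₂ μ * deriv q t₂ ν) := hconst
  rw [one_div, one_div]
  exact hc


end
end

section
/- Let G be a smooth metric and V a smooth nowhere-vanishing potential on an open set U ⊆ ℝ^d, and let ξ be a smooth vector field on U satisfying (L_ξ G)_{αμ} = ω G_{αμ} and ξ^σ ∂_σ V + ω V = 0 for some smooth function ω on U. Let q : I → U and N : I → (0,∞) be smooth functions of t on an interval I satisfying both the constraint (1/(2N²)) G_{μν}(q) q̇^μ q̇^ν + V(q) = 0 and the evolution equations q̈^α + Γ^α_{μν}(q) q̇^μ q̇^ν − (Ṅ/N) q̇^α + N² G^{αμ}(q) ∂_μ V(q) = 0. Then the quantity Q(t) = (1/N) G_{αβ}(q) ξ^α(q) q̇^β is constant on I. -/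
open scoped BigOperators

noncomputable section

section AuxLemmas

variable {d : ℕ}

lemma chainRule' {f : (Fin d → ℝ) → ℝ} {q : ℝ → Fin d → ℝ} {v : Fin d → ℝ}
    {t : ℝ} (hf : DifferentiableAt ℝ f (q t)) (hq : HasDerivAt q v t) :
    HasDerivAt (fun s => f (q s)) (∑ σ, pderiv' f σ (q t) * v σ) t := by
  have h := hf.hasFDerivAt.comp_hasDerivAt t hq
  have hv : v = ∑ σ, v σ • (Pi.single σ 1 : Fin d → ℝ) := by
    ext j
    simp [Pi.single_apply, Finset.sum_apply, mul_ite]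
  have h2 : (fderiv ℝ f (q t)) v = ∑ σ, pderiv' f σ (q t) * v σ := by
    conv_lhs => rw [hv]
    rw [map_sum]
    simp [pderiv', mul_comm]
  rwa [h2] at h


lemma sum_rot3 (F : Fin d → Fin d → Fin d → ℝ) :
    ∑ a, ∑ b, ∑ c, F a b c = ∑ c, ∑ a, ∑ b, F a b c := by
  have h1 : ∀ a : Fin d, ∑ b, ∑ c, F a b c = ∑ c, ∑ b, F a b c := fun a =>
    Finset.sum_comm
  simp only [h1]
  exact Finset.sum_comm

lemma sum_swap13 (F : Fin d → Fin d → Fin d → ℝ) :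
    ∑ a, ∑ b, ∑ c, F a b c = ∑ c, ∑ b, ∑ a, F a b c := by
  rw [sum_rot3]
  exact Finset.sum_congr rfl fun c _ => Finset.sum_comm

lemma contract1 (g gi : Fin d → Fin d → ℝ)
    (hdelta : ∀ α μ, (∑ β, g α β * gi β μ) = if α = μ then 1 else 0)
    (F : Fin d → ℝ) (α : Fin d) :
    ∑ β, g α β * ∑ σ, gi β σ * F σ = F α := by
  have h1 : ∀ β, g α β * ∑ σ, gi β σ * F σ = ∑ σ, g α β * gi β σ * F σ := by
    intro β; rw [Finset.mul_sum]; exact Finset.sum_congr rfl fun σ _ => by ring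
  simp only [h1]
  rw [Finset.sum_comm]
  have h2 : ∀ σ, ∑ β, g α β * gi β σ * F σ = (if α = σ then 1 else 0) * F σ := by
    intro σ; rw [← Finset.sum_mul, hdelta]
  simp only [h2, ite_mul, one_mul, zero_mul, Finset.sum_ite_eq, Finset.mem_univ, if_true]

lemma key_algebra
    (g gi dxi : Fin d → Fin d → ℝ) (dg : Fin d → Fin d → Fin d → ℝ)
    (xi v a dV : Fin d → ℝ) (w Vx n n' : ℝ)
    (hn : n ≠ 0)
    (hsymm : ∀ α β, g α β = g β α)
    (hdelta : ∀ α μ, (∑ β, g α β * gi β μ) = if α = μ then 1 else 0)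
    (hCKV : ∀ α μ, (∑ σ, xi σ * dg σ α μ) + (∑ σ, g σ μ * dxi α σ)
        + (∑ σ, g α σ * dxi μ σ) = w * g α μ)
    (hxiV : (∑ σ, xi σ * dV σ) + w * Vx = 0)
    (hcon : 1 / (2 * n ^ 2) * (∑ μ, ∑ ν, g μ ν * v μ * v ν) + Vx = 0)
    (heom : ∀ β, a β
        + (∑ μ, ∑ ν, (1 / 2 * ∑ σ, gi β σ * (dg μ σ ν + dg ν σ μ - dg σ μ ν)) * v μ * v ν)
        - n' / n * v β + n ^ 2 * (∑ μ, gi β μ * dV μ) = 0) :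
    (0 * n - 1 * n') / n ^ 2 * (∑ α, ∑ β, g α β * xi α * v β)
      + 1 / n * (∑ α, ∑ β,
          (((∑ σ, dg σ α β * v σ) * xi α + g α β * (∑ σ, dxi σ α * v σ)) * v β
            + g α β * xi α * a β)) = 0 := by
  set S : ℝ := ∑ α, ∑ β, g α β * xi α * v β with hS
  set K : ℝ := ∑ μ, ∑ ν, g μ ν * v μ * v ν with hK
  set A1 : ℝ := ∑ α, ∑ β, (∑ σ, dg σ α β * v σ) * xi α * v β with hA1
  set A2 : ℝ := ∑ α, ∑ β, g α β * (∑ σ, dxi σ α * v σ) * v β with hA2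
  set B : ℝ := ∑ α, ∑ μ, ∑ ν, xi α * dg α μ ν * v μ * v ν with hB
  -- solve eom for a
  have ha : ∀ β, a β = n' / n * v β
      - (∑ μ, ∑ ν, (1 / 2 * ∑ σ, gi β σ * (dg μ σ ν + dg ν σ μ - dg σ μ ν)) * v μ * v ν)
      - n ^ 2 * (∑ μ, gi β μ * dV μ) := fun β => by linarith [heom β]
  -- the contraction with dV
  have hW : (∑ α, ∑ β, g α β * xi α * (∑ μ, gi β μ * dV μ)) = ∑ α, xi α * dV α := by
    refine Finset.sum_congr rfl fun α _ => ?_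
    have h1 : ∀ β, g α β * xi α * (∑ μ, gi β μ * dV μ)
        = xi α * (g α β * ∑ μ, gi β μ * dV μ) := fun β => by ring
    simp only [h1, ← Finset.mul_sum]
    rw [contract1 g gi hdelta dV α]
  -- the contraction with the Christoffel part
  have hT : (∑ α, ∑ β, g α β * xi α *
        (∑ μ, ∑ ν, (1 / 2 * ∑ σ, gi β σ * (dg μ σ ν + dg ν σ μ - dg σ μ ν)) * v μ * v ν))
      = A1 - 1 / 2 * B := by
    have hstep : ∀ α, (∑ β, g α β * xi α *
          (∑ μ, ∑ ν, (1 / 2 * ∑ σ, gi β σ * (dg μ σ ν + dg ν σ μ - dg σ μ ν)) * v μ * v ν))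
        = xi α * (∑ μ, ∑ ν, 1 / 2 * (dg μ α ν + dg ν α μ - dg α μ ν) * v μ * v ν) := by
      intro α
      have hswap : ∀ β, (∑ μ, ∑ ν,
            (1 / 2 * ∑ σ, gi β σ * (dg μ σ ν + dg ν σ μ - dg σ μ ν)) * v μ * v ν)
          = ∑ σ, gi β σ * (∑ μ, ∑ ν,
              1 / 2 * (dg μ σ ν + dg ν σ μ - dg σ μ ν) * v μ * v ν) := by
        intro β
        have l1 : ∀ μ ν : Fin d,
            (1 / 2 * ∑ σ, gi β σ * (dg μ σ ν + dg ν σ μ - dg σ μ ν)) * v μ * v ν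
            = ∑ σ, gi β σ * (1 / 2 * (dg μ σ ν + dg ν σ μ - dg σ μ ν) * v μ * v ν) := by
          intro μ ν
          rw [Finset.mul_sum, Finset.sum_mul, Finset.sum_mul]
          exact Finset.sum_congr rfl fun σ _ => by ring
        have l2 : ∀ σ, gi β σ * (∑ μ, ∑ ν,
              1 / 2 * (dg μ σ ν + dg ν σ μ - dg σ μ ν) * v μ * v ν)
            = ∑ μ, ∑ ν, gi β σ * (1 / 2 * (dg μ σ ν + dg ν σ μ - dg σ μ ν) * v μ * v ν) := by
          intro σ
          rw [Finset.mul_sum]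
          exact Finset.sum_congr rfl fun μ _ => Finset.mul_sum ..
        simp only [l1, l2]
        exact sum_rot3 (fun μ ν σ => gi β σ * (1 / 2 * (dg μ σ ν + dg ν σ μ - dg σ μ ν) * v μ * v ν))
      have h1 : ∀ β, g α β * xi α *
          (∑ μ, ∑ ν, (1 / 2 * ∑ σ, gi β σ * (dg μ σ ν + dg ν σ μ - dg σ μ ν)) * v μ * v ν)
          = xi α * (g α β * ∑ σ, gi β σ *
              (∑ μ, ∑ ν, 1 / 2 * (dg μ σ ν + dg ν σ μ - dg σ μ ν) * v μ * v ν)) := by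
        intro β; rw [hswap β]; ring
      simp only [h1, ← Finset.mul_sum]
      rw [contract1 g gi hdelta
        (fun σ => ∑ μ, ∑ ν, 1 / 2 * (dg μ σ ν + dg ν σ μ - dg σ μ ν) * v μ * v ν) α]
    simp only [hstep]
    -- now expand: ∑α xi α * ∑μν 1/2 * (dg μ α ν + dg ν α μ - dg α μ ν) vμ vν = A1 - 1/2 B
    have e1 : ∀ α, xi α * (∑ μ, ∑ ν, 1 / 2 * (dg μ α ν + dg ν α μ - dg α μ ν) * v μ * v ν)
        = (∑ μ, ∑ ν, xi α * (1 / 2 * dg μ α ν) * v μ * v ν)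
          + (∑ μ, ∑ ν, xi α * (1 / 2 * dg ν α μ) * v μ * v ν)
          - (∑ μ, ∑ ν, xi α * (1 / 2 * dg α μ ν) * v μ * v ν) := by
      intro α
      rw [← Finset.sum_add_distrib, ← Finset.sum_sub_distrib, Finset.mul_sum]
      refine Finset.sum_congr rfl fun μ _ => ?_
      rw [← Finset.sum_add_distrib, ← Finset.sum_sub_distrib, Finset.mul_sum]
      exact Finset.sum_congr rfl fun ν _ => by ring
    simp only [e1]
    rw [Finset.sum_sub_distrib, Finset.sum_add_distrib]
    have e2 : ∀ α : Fin d, (∑ μ, ∑ ν, xi α * (1 / 2 * dg ν α μ) * v μ * v ν)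
        = ∑ μ, ∑ ν, xi α * (1 / 2 * dg μ α ν) * v μ * v ν := by
      intro α
      rw [Finset.sum_comm]
      exact Finset.sum_congr rfl fun μ _ => Finset.sum_congr rfl fun ν _ => by ring
    simp only [e2]
    have e3 : (∑ α, ∑ μ, ∑ ν, xi α * (1 / 2 * dg μ α ν) * v μ * v ν) = 1 / 2 * A1 := by
      rw [hA1, Finset.mul_sum]
      refine Finset.sum_congr rfl fun α _ => ?_
      have p : ∀ β : Fin d, (1 : ℝ) / 2 * ((∑ σ, dg σ α β * v σ) * xi α * v β)
          = ∑ σ, xi α * (1 / 2 * dg σ α β) * v σ * v β := by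
        intro β
        rw [Finset.sum_mul, Finset.sum_mul, Finset.mul_sum]
        exact Finset.sum_congr rfl fun σ _ => by ring
      rw [Finset.mul_sum]
      simp only [p]
      exact Finset.sum_comm
    have e4 : (∑ α, ∑ μ, ∑ ν, xi α * (1 / 2 * dg α μ ν) * v μ * v ν) = 1 / 2 * B := by
      rw [hB, Finset.mul_sum]
      refine Finset.sum_congr rfl fun α _ => ?_
      rw [Finset.mul_sum]
      refine Finset.sum_congr rfl fun μ _ => ?_
      rw [Finset.mul_sum]
      exact Finset.sum_congr rfl fun ν _ => by ring
    rw [e3, e4]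
    ring
  -- expanded form of A2
  have hA2' : A2 = ∑ a, ∑ b, ∑ s, g a b * dxi s a * v s * v b := by
    rw [hA2]
    refine Finset.sum_congr rfl fun a _ => Finset.sum_congr rfl fun b _ => ?_
    rw [Finset.mul_sum, Finset.sum_mul]
    exact Finset.sum_congr rfl fun s _ => by ring
  -- contracted CKV identity
  have hC : B + 2 * A2 = w * K := by
    have h2 : ∀ α μ : Fin d, ((∑ σ, xi σ * dg σ α μ) + (∑ σ, g σ μ * dxi α σ)
        + (∑ σ, g α σ * dxi μ σ)) * (v α * v μ)
        = (∑ σ, xi σ * dg σ α μ * v α * v μ) + (∑ σ, g σ μ * dxi α σ * v α * v μ)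
          + (∑ σ, g α σ * dxi μ σ * v α * v μ) := by
      intro α μ
      rw [add_mul, add_mul, Finset.sum_mul, Finset.sum_mul, Finset.sum_mul]
      congr 1
      · congr 1
        · exact Finset.sum_congr rfl fun σ _ => by ring
        · exact Finset.sum_congr rfl fun σ _ => by ring
      · exact Finset.sum_congr rfl fun σ _ => by ring
    have h1 : (∑ α, ∑ μ, ∑ σ, xi σ * dg σ α μ * v α * v μ)
        + (∑ α, ∑ μ, ∑ σ, g σ μ * dxi α σ * v α * v μ)
        + (∑ α, ∑ μ, ∑ σ, g α σ * dxi μ σ * v α * v μ) = w * K := by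
      have h1' : ∑ α, ∑ μ, ((∑ σ, xi σ * dg σ α μ) + (∑ σ, g σ μ * dxi α σ)
          + (∑ σ, g α σ * dxi μ σ)) * (v α * v μ) = w * K := by
        rw [hK, Finset.mul_sum]
        refine Finset.sum_congr rfl fun α _ => ?_
        rw [Finset.mul_sum]
        refine Finset.sum_congr rfl fun μ _ => ?_
        rw [hCKV α μ]; ring
      simp only [h2, Finset.sum_add_distrib] at h1'
      exact h1'
    have hB1 : (∑ α, ∑ μ, ∑ σ, xi σ * dg σ α μ * v α * v μ) = B := by
      rw [hB]
      exact sum_rot3 (fun x y z => xi z * dg z x y * v x * v y)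
    have hA2a : (∑ α, ∑ μ, ∑ σ, g σ μ * dxi α σ * v α * v μ) = A2 := by
      rw [hA2']
      exact sum_swap13 (fun x y z => g z y * dxi x z * v x * v y)
    have hA2b : (∑ α, ∑ μ, ∑ σ, g α σ * dxi μ σ * v α * v μ) = A2 := by
      rw [hA2']
      have step : (∑ α, ∑ μ, ∑ σ, g α σ * dxi μ σ * v α * v μ)
          = ∑ α, ∑ μ, ∑ σ, g σ α * dxi μ σ * v α * v μ := by
        refine Finset.sum_congr rfl fun α _ => Finset.sum_congr rfl fun μ _ =>
          Finset.sum_congr rfl fun σ _ => ?_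
        rw [hsymm α σ]
      rw [step, sum_rot3 (fun x y z => g z x * dxi y z * v x * v y)]
      refine Finset.sum_congr rfl fun a _ => Finset.sum_congr rfl fun b _ =>
        Finset.sum_congr rfl fun s _ => by ring
    rw [hB1, hA2a, hA2b] at h1
    linarith
  -- the ξ·∂V term
  have hXV : (∑ α, xi α * dV α) = -(w * Vx) := by linarith [hxiV]
  -- the value of K from the constraint
  have hK2 : K = -(2 * n ^ 2 * Vx) := by
    have h2n : (2 : ℝ) * n ^ 2 ≠ 0 := by positivity
    field_simp at hcon
    linarith
  -- compute the acceleration contraction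
  have hP3 : (∑ α, ∑ β, g α β * xi α * a β)
      = n' / n * S - (A1 - 1 / 2 * B) - n ^ 2 * (-(w * Vx)) := by
    have p1 : ∀ α β : Fin d, g α β * xi α * a β
        = g α β * xi α * (n' / n * v β)
          - g α β * xi α * (∑ μ, ∑ ν,
              (1 / 2 * ∑ σ, gi β σ * (dg μ σ ν + dg ν σ μ - dg σ μ ν)) * v μ * v ν)
          - n ^ 2 * (g α β * xi α * (∑ μ, gi β μ * dV μ)) := by
      intro α β; rw [ha β]; ring
    simp only [p1, Finset.sum_sub_distrib]
    have q1 : (∑ α, ∑ β, g α β * xi α * (n' / n * v β)) = n' / n * S := by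
      rw [hS, Finset.mul_sum]
      refine Finset.sum_congr rfl fun α _ => ?_
      rw [Finset.mul_sum]
      exact Finset.sum_congr rfl fun β _ => by ring
    have q3 : (∑ α, ∑ β, n ^ 2 * (g α β * xi α * (∑ μ, gi β μ * dV μ)))
        = n ^ 2 * (∑ α, xi α * dV α) := by
      rw [← hW, Finset.mul_sum]
      exact Finset.sum_congr rfl fun α _ => by rw [Finset.mul_sum]
    rw [q1, q3, hT, hXV]
  -- final assembly
  have hbig : (∑ α, ∑ β,
        (((∑ σ, dg σ α β * v σ) * xi α + g α β * (∑ σ, dxi σ α * v σ)) * v β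
          + g α β * xi α * a β))
      = A1 + A2 + (∑ α, ∑ β, g α β * xi α * a β) := by
    have e : ∀ α β : Fin d,
        ((∑ σ, dg σ α β * v σ) * xi α + g α β * (∑ σ, dxi σ α * v σ)) * v β
          + g α β * xi α * a β
        = (∑ σ, dg σ α β * v σ) * xi α * v β
          + (g α β * (∑ σ, dxi σ α * v σ) * v β + g α β * xi α * a β) := by
      intro α β; ring
    simp only [e, Finset.sum_add_distrib]
    rw [hA1, hA2]
    ring
  rw [hbig, hP3]
  linear_combination (1 / (2 * n)) * hC + (w / (2 * n)) * hK2


end AuxLemmas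

/-- If `ξ` is a conformal Killing vector of `G` with `(L_ξ G)_{αμ} = ω G_{αμ}`
and `ξ^σ ∂_σ V + ω V = 0`, then along any solution `(q, N)` of the constrained Euler–Lagrange
equations the quantity `Q = (1/N) G_{αβ} ξ^α q̇^β` is conserved. -/
theorem linear_integral_of_motion_of_conformal_killing_vector
    {d : ℕ} (U : Set (Fin d → ℝ)) (hU : IsOpen U)
    (G : (Fin d → ℝ) → Fin d → Fin d → ℝ)
    (V : (Fin d → ℝ) → ℝ)
    (ξ : (Fin d → ℝ) → Fin d → ℝ)
    (ω : (Fin d → ℝ) → ℝ)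
    (hG : ∀ α μ, ContDiffOn ℝ (⊤ : ℕ∞) (fun x => G x α μ) U)
    (hGsymm : ∀ x ∈ U, ∀ α μ, G x α μ = G x μ α)
    (hGinv : ∀ x ∈ U, (Matrix.of (G x)).det ≠ 0)
    (hV : ContDiffOn ℝ (⊤ : ℕ∞) V U)
    (hV0 : ∀ x ∈ U, V x ≠ 0)
    (hξ : ∀ σ, ContDiffOn ℝ (⊤ : ℕ∞) (fun x => ξ x σ) U)
    (hω : ContDiffOn ℝ (⊤ : ℕ∞) ω U)
    -- the conformal Killing vector condition `(L_ξ G)_{αμ} = ω G_{αμ}`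
    (hCKV : ∀ x ∈ U, ∀ α μ, lieD ξ G x α μ = ω x * G x α μ)
    -- the condition `ξ^σ ∂_σ V + ω V = 0`
    (hξV : ∀ x ∈ U, (∑ σ, ξ x σ * pderiv' V σ x) + ω x * V x = 0)
    -- the solution `(q, N)` on an interval `I`
    (I : Set ℝ) (hI : IsOpen I) (hIconn : I.OrdConnected)
    (q : ℝ → (Fin d → ℝ)) (N : ℝ → ℝ)
    (hq : ContDiffOn ℝ (⊤ : ℕ∞) q I) (hN : ContDiffOn ℝ (⊤ : ℕ∞) N I)
    (hqU : ∀ t ∈ I, q t ∈ U) (hNpos : ∀ t ∈ I, 0 < N t)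
    -- the Hamiltonian constraint
    (hconstraint : ∀ t ∈ I,
        (1 / (2 * (N t)^2)) * (∑ μ, ∑ ν, G (q t) μ ν * deriv q t μ * deriv q t ν)
          + V (q t) = 0)
    -- the evolution equations
    (heom : ∀ t ∈ I, ∀ α,
        deriv (deriv q) t α
          + (∑ μ, ∑ ν, christoffel G (q t) α μ ν * deriv q t μ * deriv q t ν)
          - (deriv N t / N t) * deriv q t α
          + (N t)^2 * (∑ μ, metricInv G (q t) α μ * pderiv' V μ (q t)) = 0) :
    ∀ t₁ ∈ I, ∀ t₂ ∈ I,
      (1 / N t₁) * (∑ α, ∑ β, G (q t₁) α β * ξ (q t₁) α * deriv q t₁ β) =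
      (1 / N t₂) * (∑ α, ∑ β, G (q t₂) α β * ξ (q t₂) α * deriv q t₂ β) := by
  -- the conserved quantity
  have key : ∀ t ∈ I, HasDerivAt
      (fun s => 1 / N s * (∑ α, ∑ β, G (q s) α β * ξ (q s) α * deriv q s β)) 0 t := by
    intro t ht
    have hx : q t ∈ U := hqU t ht
    have hn : N t ≠ 0 := ne_of_gt (hNpos t ht)
    have hqd : HasDerivAt q (deriv q t) t :=
      ((hq.contDiffAt (hI.mem_nhds ht)).differentiableAt (by simp)).hasDerivAt
    have hdq : ContDiffOn ℝ (⊤ : ℕ∞) (deriv q) I := hq.deriv_of_isOpen hI (by simp)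
    have haccel : HasDerivAt (deriv q) (deriv (deriv q) t) t :=
      ((hdq.contDiffAt (hI.mem_nhds ht)).differentiableAt (by simp)).hasDerivAt
    have hvd : ∀ β, HasDerivAt (fun s => deriv q s β) (deriv (deriv q) t β) t :=
      fun β => (hasDerivAt_pi.mp haccel) β
    have hNd : HasDerivAt N (deriv N t) t :=
      ((hN.contDiffAt (hI.mem_nhds ht)).differentiableAt (by simp)).hasDerivAt
    have hGd : ∀ α β, HasDerivAt (fun s => G (q s) α β)
        (∑ σ, pderiv' (fun y => G y α β) σ (q t) * deriv q t σ) t := fun α β =>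
      chainRule' (((hG α β).contDiffAt (hU.mem_nhds hx)).differentiableAt (by simp)) hqd
    have hξd : ∀ α, HasDerivAt (fun s => ξ (q s) α)
        (∑ σ, pderiv' (fun y => ξ y α) σ (q t) * deriv q t σ) t := fun α =>
      chainRule' (((hξ α).contDiffAt (hU.mem_nhds hx)).differentiableAt (by simp)) hqd
    have hS : HasDerivAt (fun s => ∑ α, ∑ β, G (q s) α β * ξ (q s) α * deriv q s β)
        (∑ α, ∑ β, (((∑ σ, pderiv' (fun y => G y α β) σ (q t) * deriv q t σ) * ξ (q t) α
            + G (q t) α β * (∑ σ, pderiv' (fun y => ξ y α) σ (q t) * deriv q t σ))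
              * deriv q t β
          + G (q t) α β * ξ (q t) α * deriv (deriv q) t β)) t :=
      HasDerivAt.fun_sum fun α _ => HasDerivAt.fun_sum fun β _ =>
        ((hGd α β).mul (hξd α)).mul (hvd β)
    have hQd : HasDerivAt
        (fun s => 1 / N s * (∑ α, ∑ β, G (q s) α β * ξ (q s) α * deriv q s β))
        ((0 * N t - 1 * deriv N t) / N t ^ 2
            * (∑ α, ∑ β, G (q t) α β * ξ (q t) α * deriv q t β)
          + 1 / N t * (∑ α, ∑ β,
              (((∑ σ, pderiv' (fun y => G y α β) σ (q t) * deriv q t σ) * ξ (q t) α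
                + G (q t) α β * (∑ σ, pderiv' (fun y => ξ y α) σ (q t) * deriv q t σ))
                  * deriv q t β
              + G (q t) α β * ξ (q t) α * deriv (deriv q) t β))) t :=
      ((hasDerivAt_const t (1 : ℝ)).div hNd hn).mul hS
    -- the inverse metric relation
    have hdelta' : ∀ α μ, (∑ β, G (q t) α β * metricInv G (q t) β μ)
        = if α = μ then 1 else 0 := by
      intro α μ
      have h := Matrix.mul_nonsing_inv (Matrix.of (G (q t))) (Ne.isUnit (hGinv _ hx))
      have h2 : ((Matrix.of (G (q t))) * (Matrix.of (G (q t)))⁻¹) α μ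
          = (1 : Matrix (Fin d) (Fin d) ℝ) α μ := by rw [h]
      simpa [Matrix.mul_apply, Matrix.one_apply, metricInv, Matrix.of_apply] using h2
    have hz : ((0 * N t - 1 * deriv N t) / N t ^ 2
            * (∑ α, ∑ β, G (q t) α β * ξ (q t) α * deriv q t β)
          + 1 / N t * (∑ α, ∑ β,
              (((∑ σ, pderiv' (fun y => G y α β) σ (q t) * deriv q t σ) * ξ (q t) α
                + G (q t) α β * (∑ σ, pderiv' (fun y => ξ y α) σ (q t) * deriv q t σ))
                  * deriv q t β
              + G (q t) α β * ξ (q t) α * deriv (deriv q) t β))) = 0 :=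
      key_algebra (G (q t)) (metricInv G (q t))
        (fun σ α => pderiv' (fun y => ξ y α) σ (q t))
        (fun σ α β => pderiv' (fun y => G y α β) σ (q t))
        (ξ (q t)) (deriv q t) (deriv (deriv q) t) (fun μ => pderiv' V μ (q t))
        (ω (q t)) (V (q t)) (N t) (deriv N t) hn
        (hGsymm _ hx) hdelta' (hCKV _ hx) (hξV _ hx) (hconstraint t ht) (heom t ht)
    rw [hz] at hQd
    exact hQd
  intro t₁ ht₁ t₂ ht₂
  have hconv : Convex ℝ I := hIconn.convex
  have hle := Convex.norm_image_sub_le_of_norm_hasDerivWithin_le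
    (C := 0) (f' := fun _ : ℝ => (0 : ℝ))
    (fun t ht => (key t ht).hasDerivWithinAt)
    (fun t _ => by simp) hconv ht₁ ht₂
  have h0 : (fun s => 1 / N s * (∑ α, ∑ β, G (q s) α β * ξ (q s) α * deriv q s β)) t₂
      - (fun s => 1 / N s * (∑ α, ∑ β, G (q s) α β * ξ (q s) α * deriv q s β)) t₁ = 0 := by
    simpa using hle
  have := sub_eq_zero.mp h0
  simpa using this.symm


end
end

section
/- Non-essentiality of the gauge function: let G be a smooth metric and V a smooth nowhere-vanishing potential on an open set U ⊆ ℝ^d, and suppose the smooth symmetric 2-tensor S, covector ψ, and function f on U satisfy S_{(αβ;μ)} = ψ_{(μ} G_{αβ)} and S_{σμ} V^{,σ} + ψ_μ V + (1/2) ∂_μ f = 0, where V^{,σ} = G^{σρ} ∂_ρ V. Then the redefined tensor S̃_{αβ} = S_{αβ} + (f/(2V)) G_{αβ} and covector ψ̃_μ = ψ_μ + (1/2) ∂_μ(f/V) satisfy S̃_{(αβ;μ)} = ψ̃_{(μ} G_{αβ)} and S̃_{σμ} V^{,σ} + ψ̃_μ V = 0; i.e. any solution of the symmetry condition with nonconstant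 gauge function is equivalent to one with vanishing gauge function. -/
open scoped BigOperators

noncomputable section

lemma pd_congr' {d : ℕ} {U : Set (Fin d → ℝ)} (hU : IsOpen U) {a b : (Fin d → ℝ) → ℝ}
    {x : Fin d → ℝ} (hx : x ∈ U) (hab : ∀ y ∈ U, a y = b y) (σ : Fin d) :
    pderiv' a σ x = pderiv' b σ x := by
  unfold pderiv'
  rw [Filter.EventuallyEq.fderiv_eq (Filter.eventuallyEq_of_mem (hU.mem_nhds hx) hab)]

lemma diffAt_of_contDiffOn' {d : ℕ} {U : Set (Fin d → ℝ)} (hU : IsOpen U)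
    {g : (Fin d → ℝ) → ℝ} (hg : ContDiffOn ℝ (⊤ : ℕ∞) g U) {x : Fin d → ℝ} (hx : x ∈ U) :
    DifferentiableAt ℝ g x :=
  ((hg.differentiableOn (by simp)).differentiableAt (hU.mem_nhds hx))

lemma pd_add' {d : ℕ} {a b : (Fin d → ℝ) → ℝ} {x : Fin d → ℝ}
    (ha : DifferentiableAt ℝ a x) (hb : DifferentiableAt ℝ b x) (σ : Fin d) :
    pderiv' (fun y => a y + b y) σ x = pderiv' a σ x + pderiv' b σ x := by
  unfold pderiv'; rw [fderiv_fun_add ha hb]; simp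

lemma pd_mul' {d : ℕ} {a b : (Fin d → ℝ) → ℝ} {x : Fin d → ℝ}
    (ha : DifferentiableAt ℝ a x) (hb : DifferentiableAt ℝ b x) (σ : Fin d) :
    pderiv' (fun y => a y * b y) σ x = pderiv' a σ x * b x + a x * pderiv' b σ x := by
  unfold pderiv'; rw [fderiv_fun_mul ha hb]; simp; ring

lemma pd_const_mul' {d : ℕ} {a : (Fin d → ℝ) → ℝ} {x : Fin d → ℝ}
    (ha : DifferentiableAt ℝ a x) (c : ℝ) (σ : Fin d) :
    pderiv' (fun y => c * a y) σ x = c * pderiv' a σ x := by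
  unfold pderiv'; rw [fderiv_const_mul ha]; simp

lemma pd_div' {d : ℕ} {a b : (Fin d → ℝ) → ℝ} {x : Fin d → ℝ}
    (ha : DifferentiableAt ℝ a x) (hb : DifferentiableAt ℝ b x) (hbx : b x ≠ 0) (σ : Fin d) :
    pderiv' (fun y => a y / b y) σ x
      = (pderiv' a σ x * b x - a x * pderiv' b σ x) / (b x) ^ 2 := by
  have hinv : HasFDerivAt (fun y => (b y)⁻¹) ((-((b x) ^ 2)⁻¹) • fderiv ℝ b x) x :=
    (hasDerivAt_inv hbx).comp_hasFDerivAt x hb.hasFDerivAt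
  have hmul := (ha.hasFDerivAt.fun_mul hinv).fderiv
  unfold pderiv'
  simp only [div_eq_mul_inv]
  rw [hmul]
  simp only [ContinuousLinearMap.add_apply, ContinuousLinearMap.smul_apply,
    ContinuousLinearMap.smulRight_apply, ContinuousLinearMap.neg_apply, smul_eq_mul]
  field_simp
  ring

lemma sum_G_inv' {d : ℕ} (G : (Fin d → ℝ) → Fin d → Fin d → ℝ) (x : Fin d → ℝ)
    (hdet : (Matrix.of (G x)).det ≠ 0) (β τ : Fin d) :
    ∑ σ, G x β σ * metricInv G x σ τ = if β = τ then 1 else 0 := by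
  have h := Matrix.mul_nonsing_inv (Matrix.of (G x)) (isUnit_iff_ne_zero.mpr hdet)
  have h2 := congrFun (congrFun h β) τ
  rw [Matrix.mul_apply] at h2
  simpa [metricInv, Matrix.one_apply] using h2

lemma GammaG' {d : ℕ} (G : (Fin d → ℝ) → Fin d → Fin d → ℝ) (x : Fin d → ℝ)
    (hdet : (Matrix.of (G x)).det ≠ 0) (hsymm : ∀ α μ, G x α μ = G x μ α) (α μ β : Fin d) :
    ∑ σ, christoffel G x σ α μ * G x σ β
      = (1/2) * (pderiv' (fun y => G y β μ) α x + pderiv' (fun y => G y β α) μ x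
          - pderiv' (fun y => G y α μ) β x) := by
  unfold christoffel
  have step : ∀ τ : Fin d, ∑ σ, (1/2) * (metricInv G x σ τ *
      (pderiv' (fun y => G y τ μ) α x + pderiv' (fun y => G y τ α) μ x
        - pderiv' (fun y => G y α μ) τ x)) * G x σ β
      = (if β = τ then 1 else 0) * ((1/2) * (pderiv' (fun y => G y τ μ) α x
          + pderiv' (fun y => G y τ α) μ x - pderiv' (fun y => G y α μ) τ x)) := by
    intro τ
    rw [← sum_G_inv' G x hdet β τ, Finset.sum_mul]
    apply Finset.sum_congr rfl
    intro σ _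
    rw [hsymm β σ]
    ring
  calc ∑ σ, ((1/2) * ∑ τ, metricInv G x σ τ *
      (pderiv' (fun y => G y τ μ) α x + pderiv' (fun y => G y τ α) μ x
        - pderiv' (fun y => G y α μ) τ x)) * G x σ β
      = ∑ τ, ∑ σ, (1/2) * (metricInv G x σ τ *
      (pderiv' (fun y => G y τ μ) α x + pderiv' (fun y => G y τ α) μ x
        - pderiv' (fun y => G y α μ) τ x)) * G x σ β := by
        rw [Finset.sum_comm]
        apply Finset.sum_congr rfl
        intro σ _
        rw [Finset.mul_sum, Finset.sum_mul]
    _ = ∑ τ, (if β = τ then 1 else 0) * ((1/2) * (pderiv' (fun y => G y τ μ) α x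
          + pderiv' (fun y => G y τ α) μ x - pderiv' (fun y => G y α μ) τ x)) := by
        exact Finset.sum_congr rfl (fun τ _ => step τ)
    _ = _ := by simp

lemma covDGzero' {d : ℕ} {U : Set (Fin d → ℝ)} (hU : IsOpen U)
    (G : (Fin d → ℝ) → Fin d → Fin d → ℝ)
    (hGsymm : ∀ x ∈ U, ∀ α μ, G x α μ = G x μ α)
    (hGinv : ∀ x ∈ U, (Matrix.of (G x)).det ≠ 0)
    {x : Fin d → ℝ} (hx : x ∈ U) (α β μ : Fin d) :
    covD G G x α β μ = 0 := by
  unfold covD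
  rw [GammaG' G x (hGinv x hx) (hGsymm x hx) α μ β]
  have h2 : ∑ σ, christoffel G x σ β μ * G x α σ
      = (1/2) * (pderiv' (fun y => G y α μ) β x + pderiv' (fun y => G y α β) μ x
          - pderiv' (fun y => G y β μ) α x) := by
    rw [← GammaG' G x (hGinv x hx) (hGsymm x hx) β μ α]
    exact Finset.sum_congr rfl (fun σ _ => by rw [hGsymm x hx α σ])
  rw [h2]
  have e1 : pderiv' (fun y => G y β α) μ x = pderiv' (fun y => G y α β) μ x :=
    pd_congr' hU hx (fun y hy => hGsymm y hy β α) μ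
  rw [e1]
  ring

/-- Non-essentiality of the gauge function: if `S`, `ψ`, `f` satisfy
`S_{(αβ;μ)} = ψ_{(μ} G_{αβ)}` and `S_{σμ} V^{,σ} + ψ_μ V + (1/2) ∂_μ f = 0`, then the
redefined tensor `S̃_{αβ} = S_{αβ} + (f/(2V)) G_{αβ}` and covector
`ψ̃_μ = ψ_μ + (1/2) ∂_μ(f/V)` satisfy `S̃_{(αβ;μ)} = ψ̃_{(μ} G_{αβ)}` and
`S̃_{σμ} V^{,σ} + ψ̃_μ V = 0`. -/
theorem gauge_function_nonessential
    {d : ℕ} (U : Set (Fin d → ℝ)) (hU : IsOpen U)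
    (G : (Fin d → ℝ) → Fin d → Fin d → ℝ)
    (V f : (Fin d → ℝ) → ℝ)
    (S : (Fin d → ℝ) → Fin d → Fin d → ℝ)
    (ψ : (Fin d → ℝ) → Fin d → ℝ)
    (hG : ∀ α μ, ContDiffOn ℝ (⊤ : ℕ∞) (fun x => G x α μ) U)
    (hGsymm : ∀ x ∈ U, ∀ α μ, G x α μ = G x μ α)
    (hGinv : ∀ x ∈ U, (Matrix.of (G x)).det ≠ 0)
    (hV : ContDiffOn ℝ (⊤ : ℕ∞) V U)
    (hV0 : ∀ x ∈ U, V x ≠ 0)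
    (hf : ContDiffOn ℝ (⊤ : ℕ∞) f U)
    (hS : ∀ α μ, ContDiffOn ℝ (⊤ : ℕ∞) (fun x => S x α μ) U)
    (hSsymm : ∀ x ∈ U, ∀ α μ, S x α μ = S x μ α)
    (hψ : ∀ μ, ContDiffOn ℝ (⊤ : ℕ∞) (fun x => ψ x μ) U)
    -- `S_{(αβ;μ)} = ψ_{(μ} G_{αβ)}`
    (hCKT : ∀ x ∈ U, ∀ α β μ, symCovD G S x α β μ =
        (ψ x μ * G x α β + ψ x α * G x β μ + ψ x β * G x μ α) / 3)
    -- `S_{σμ} V^{,σ} + ψ_μ V + (1/2) ∂_μ f = 0`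
    (hSV : ∀ x ∈ U, ∀ μ,
        (∑ σ, S x σ μ * (∑ ρ, metricInv G x σ ρ * pderiv' V ρ x)) + ψ x μ * V x
          + (1/2) * pderiv' f μ x = 0) :
    -- `S̃_{(αβ;μ)} = ψ̃_{(μ} G_{αβ)}`
    (∀ x ∈ U, ∀ α β μ,
        symCovD G (fun y a b => S y a b + (f y / (2 * V y)) * G y a b) x α β μ =
          ((ψ x μ + (1/2) * pderiv' (fun y => f y / V y) μ x) * G x α β
            + (ψ x α + (1/2) * pderiv' (fun y => f y / V y) α x) * G x β μ
            + (ψ x β + (1/2) * pderiv' (fun y => f y / V y) β x) * G x μ α) / 3)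
    -- `S̃_{σμ} V^{,σ} + ψ̃_μ V = 0`
    ∧ (∀ x ∈ U, ∀ μ,
        (∑ σ, (S x σ μ + (f x / (2 * V x)) * G x σ μ)
            * (∑ ρ, metricInv G x σ ρ * pderiv' V ρ x))
          + (ψ x μ + (1/2) * pderiv' (fun y => f y / V y) μ x) * V x = 0) := by
  -- proof
  -- common facts
  have hheq : (fun y => f y / (2 * V y)) = fun y => (1/2) * (f y / V y) := by
    funext y
    rw [div_eq_mul_inv, div_eq_mul_inv, mul_inv]
    ring
  constructor
  · intro x hx α β μ
    have hVx : V x ≠ 0 := hV0 x hx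
    have dV : DifferentiableAt ℝ V x := diffAt_of_contDiffOn' hU hV hx
    have df : DifferentiableAt ℝ f x := diffAt_of_contDiffOn' hU hf hx
    have dVinv : DifferentiableAt ℝ (fun y => (V y)⁻¹) x :=
      ((hasDerivAt_inv hVx).comp_hasFDerivAt x dV.hasFDerivAt).differentiableAt
    have dfV : DifferentiableAt ℝ (fun y => f y / V y) x := by
      simp only [div_eq_mul_inv]; exact df.mul dVinv
    have dh : DifferentiableAt ℝ (fun y => f y / (2 * V y)) x := by
      rw [hheq]; exact (differentiableAt_const _).mul dfV
    have dG : ∀ a b, DifferentiableAt ℝ (fun y => G y a b) x :=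
      fun a b => diffAt_of_contDiffOn' hU (hG a b) hx
    have dS : ∀ a b, DifferentiableAt ℝ (fun y => S y a b) x :=
      fun a b => diffAt_of_contDiffOn' hU (hS a b) hx
    have pdh : ∀ σ, pderiv' (fun y => f y / (2 * V y)) σ x
        = (1/2) * pderiv' (fun y => f y / V y) σ x := by
      intro σ; rw [hheq]; exact pd_const_mul' dfV (1/2) σ
    have covD_new : ∀ a b m, covD G (fun y a b => S y a b + (f y / (2 * V y)) * G y a b) x a b m
        = covD G S x a b m + pderiv' (fun y => f y / (2 * V y)) m x * G x a b
          + (f x / (2 * V x)) * covD G G x a b m := by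
      intro a b m
      unfold covD
      rw [pd_add' (dS a b) (dh.fun_mul (dG a b)) m, pd_mul' dh (dG a b) m]
      have sum1 : ∑ σ, christoffel G x σ a m * (S x σ b + f x / (2 * V x) * G x σ b)
          = (∑ σ, christoffel G x σ a m * S x σ b)
            + f x / (2 * V x) * ∑ σ, christoffel G x σ a m * G x σ b := by
        rw [Finset.mul_sum, ← Finset.sum_add_distrib]
        exact Finset.sum_congr rfl (fun σ _ => by ring)
      have sum2 : ∑ σ, christoffel G x σ b m * (S x a σ + f x / (2 * V x) * G x a σ)
          = (∑ σ, christoffel G x σ b m * S x a σ)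
            + f x / (2 * V x) * ∑ σ, christoffel G x σ b m * G x a σ := by
        rw [Finset.mul_sum, ← Finset.sum_add_distrib]
        exact Finset.sum_congr rfl (fun σ _ => by ring)
      rw [sum1, sum2]
      ring
    have hcz := covDGzero' hU G hGsymm hGinv hx
    unfold symCovD
    rw [covD_new α β μ, covD_new β μ α, covD_new μ α β, hcz α β μ, hcz β μ α, hcz μ α β,
      pdh μ, pdh α, pdh β]
    have hCKT' := hCKT x hx α β μ
    unfold symCovD at hCKT'
    field_simp at hCKT' ⊢
    linear_combination (2 * V x) * hCKT'
  · intro x hx μ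
    have hVx : V x ≠ 0 := hV0 x hx
    have hWG : ∑ σ, G x σ μ * (∑ ρ, metricInv G x σ ρ * pderiv' V ρ x) = pderiv' V μ x := by
      calc ∑ σ, G x σ μ * (∑ ρ, metricInv G x σ ρ * pderiv' V ρ x)
          = ∑ ρ, (∑ σ, G x μ σ * metricInv G x σ ρ) * pderiv' V ρ x := by
            simp only [Finset.mul_sum, Finset.sum_mul]
            rw [Finset.sum_comm]
            refine Finset.sum_congr rfl (fun ρ _ => Finset.sum_congr rfl (fun σ _ => by
              rw [hGsymm x hx σ μ]; ring))
        _ = ∑ ρ, (if μ = ρ then 1 else 0) * pderiv' V ρ x := by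
            exact Finset.sum_congr rfl (fun ρ _ => by rw [sum_G_inv' G x (hGinv x hx) μ ρ])
        _ = pderiv' V μ x := by simp
    have hsplit : ∑ σ, (S x σ μ + (f x / (2 * V x)) * G x σ μ)
          * (∑ ρ, metricInv G x σ ρ * pderiv' V ρ x)
        = (∑ σ, S x σ μ * (∑ ρ, metricInv G x σ ρ * pderiv' V ρ x))
          + (f x / (2 * V x)) * ∑ σ, G x σ μ * (∑ ρ, metricInv G x σ ρ * pderiv' V ρ x) := by
      rw [Finset.mul_sum, ← Finset.sum_add_distrib]
      exact Finset.sum_congr rfl (fun σ _ => by ring)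
    have dV : DifferentiableAt ℝ V x := diffAt_of_contDiffOn' hU hV hx
    have df : DifferentiableAt ℝ f x := diffAt_of_contDiffOn' hU hf hx
    have pdfV : pderiv' (fun y => f y / V y) μ x
        = (pderiv' f μ x * V x - f x * pderiv' V μ x) / (V x) ^ 2 :=
      pd_div' df dV hVx μ
    have hsv := hSV x hx μ
    rw [hsplit, hWG, pdfV]
    have hSS : (∑ σ, S x σ μ * (∑ ρ, metricInv G x σ ρ * pderiv' V ρ x))
        = -(ψ x μ * V x) - (1/2) * pderiv' f μ x := by linarith
    rw [hSS]
    field_simp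
    ring

end
end

section
/- Ray–Reid invariant: let ω, J : ℝ → ℝ be continuously differentiable and let α, β : I → ℝ be twice differentiable functions of t on an interval I with α(t) ≠ 0 for all t, satisfying the equations of motion α̈ = −∂_α V(α,β) and β̈ = −∂_β V(α,β), where V(α,β) = (1/2) ω(α²+β²) + α^{−2} J(β/α). Then the quantity I(t) = (1/2)(α̇ β − α β̇)² + ((α² + β²)/α²) J(β/α) is constant on I. -/
/-!
Write `L = α̇β − αβ̇` and `u = β/α`, so that `u̇ = −L/α²` and `(α² + β²)/α² = 1 + u²`.
The radial part `ω(α² + β²)` of the potential is rotation invariant, so it drops out of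
`L̇ = α̈β − αβ̈`; what remains is the angular derivative of the degree `−2` homogeneous part
`α⁻² J(β/α)`, namely `L̇ = (2 u J(u) + (1 + u²) J'(u)) / α²`. Hence
`d/dt (L²/2) = −u̇ (2 u J(u) + (1 + u²) J'(u)) = −d/dt ((1 + u²) J(u))`.
-/

open Set

theorem Set.OrdConnected.eq_of_hasDerivAt_eq_zero {E : Type*} [NormedAddCommGroup E]
    [NormedSpace ℝ E] {s : Set ℝ} (hs : s.OrdConnected) {f : ℝ → E}
    (hf : ∀ x ∈ s, HasDerivAt f 0 x) {x y : ℝ} (hx : x ∈ s) (hy : y ∈ s) : f x = f y := by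
  wlog hxy : x ≤ y generalizing x y
  · exact (this hy hx (le_of_not_ge hxy)).symm
  have hIcc : Icc x y ⊆ s := hs.out hx hy
  have hconst := constant_of_has_deriv_right_zero
    (fun z hz => (hf z (hIcc hz)).continuousAt.continuousWithinAt)
    (fun z hz => (hf z (hIcc (Ico_subset_Icc_self hz))).hasDerivWithinAt)
  exact (hconst y ⟨hxy, le_rfl⟩).symm

noncomputable def ermakovPotential (ω J : ℝ → ℝ) (a b : ℝ) : ℝ :=
  (1/2) * ω (a^2 + b^2) + (a^2)⁻¹ * J (b / a)

noncomputable def rayReidInvariant (J : ℝ → ℝ) (a b a' b' : ℝ) : ℝ :=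
  (1/2) * (a' * b - a * b')^2 + ((a^2 + b^2) / a^2) * J (b / a)

section Derivatives

variable {ω J : ℝ → ℝ} {a b ω' j' : ℝ}

theorem hasDerivAt_ermakovPotential_fst (hω : HasDerivAt ω ω' (a^2 + b^2))
    (hJ : HasDerivAt J j' (b / a)) (ha : a ≠ 0) :
    HasDerivAt (fun x => ermakovPotential ω J x b)
      (a * ω' - (2 * a * J (b / a) + b * j') / a^4) a := by
  have hsq : HasDerivAt (fun x : ℝ => x^2 + b^2) (2 * a) a := by
    simpa using (hasDerivAt_pow 2 a).add_const (b^2)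
  have hinv : HasDerivAt (fun x : ℝ => (x^2)⁻¹) (-(2 * a) / (a^2)^2) a := by
    simpa using (hasDerivAt_pow 2 a).fun_inv (pow_ne_zero 2 ha)
  have hquot : HasDerivAt (fun x : ℝ => b / x) (-b / a^2) a := by
    simpa [div_eq_mul_inv] using (hasDerivAt_inv ha).const_mul b
  refine (((hω.comp a hsq).const_mul (1/2 : ℝ)).add (hinv.mul (hJ.comp a hquot))).congr_deriv ?_
  simp only [Function.comp_apply]
  field_simp
  ring

theorem hasDerivAt_ermakovPotential_snd (hω : HasDerivAt ω ω' (a^2 + b^2))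
    (hJ : HasDerivAt J j' (b / a)) :
    HasDerivAt (fun y => ermakovPotential ω J a y) (b * ω' + j' / a^3) b := by
  have hsq : HasDerivAt (fun y : ℝ => a^2 + y^2) (2 * b) b := by
    simpa using (hasDerivAt_pow 2 b).const_add (a^2)
  have hquot : HasDerivAt (fun y : ℝ => y / a) (1 / a) b := by
    simpa using (hasDerivAt_id b).div_const a
  refine (((hω.comp b hsq).const_mul (1/2 : ℝ)).add
    ((hJ.comp b hquot).const_mul (a^2)⁻¹)).congr_deriv ?_
  ring

end Derivatives

theorem hasDerivAt_rayReidInvariant_eq_zero {J x y x' y' : ℝ → ℝ} {t ω' j' : ℝ}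
    (hx : HasDerivAt x (x' t) t) (hy : HasDerivAt y (y' t) t)
    (hx' : HasDerivAt x' (-(x t * ω' - (2 * x t * J (y t / x t) + y t * j') / x t ^ 4)) t)
    (hy' : HasDerivAt y' (-(y t * ω' + j' / x t ^ 3)) t)
    (hJ : HasDerivAt J j' (y t / x t)) (hx0 : x t ≠ 0) :
    HasDerivAt (fun s => rayReidInvariant J (x s) (y s) (x' s) (y' s)) 0 t := by
  have hL : HasDerivAt (fun s => x' s * y s - x s * y' s)
      ((2 * x t * y t * J (y t / x t) + (x t ^ 2 + y t ^ 2) * j') / x t ^ 4) t := by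
    refine ((hx'.mul hy).sub (hx.mul hy')).congr_deriv ?_
    field_simp
    ring
  have hu : HasDerivAt (fun s => y s / x s) (-(x' t * y t - x t * y' t) / x t ^ 2) t := by
    refine (hy.div hx hx0).congr_deriv ?_
    ring
  have hK : HasDerivAt (fun s => (x s ^ 2 + y s ^ 2) / x s ^ 2)
      (2 * (y t / x t) * (-(x' t * y t - x t * y' t) / x t ^ 2)) t := by
    refine (((hx.pow 2).add (hy.pow 2)).div (hx.pow 2) (pow_ne_zero 2 hx0)).congr_deriv ?_
    simp only [Pi.pow_apply, Pi.add_apply]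
    field_simp
    ring
  refine (((hL.pow 2).const_mul (1/2 : ℝ)).add (hK.mul (hJ.comp t hu))).congr_deriv ?_
  simp only [Function.comp_apply]
  field_simp
  ring

theorem ray_reid_invariant_general (ω J : ℝ → ℝ) (hω : ContDiff ℝ 1 ω) (hJ : ContDiff ℝ 1 J)
    (I : Set ℝ) (hIconn : I.OrdConnected)
    (α β : ℝ → ℝ)
    (hα : ∀ t ∈ I, DifferentiableAt ℝ α t) (hα' : ∀ t ∈ I, DifferentiableAt ℝ (deriv α) t)
    (hβ : ∀ t ∈ I, DifferentiableAt ℝ β t) (hβ' : ∀ t ∈ I, DifferentiableAt ℝ (deriv β) t)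
    (hα0 : ∀ t ∈ I, α t ≠ 0)
    -- `α̈ = −∂_α V(α,β)`
    (heomα : ∀ t ∈ I, deriv (deriv α) t =
        -(deriv (fun a => (1/2) * ω (a^2 + (β t)^2) + (a^2)⁻¹ * J (β t / a)) (α t)))
    -- `β̈ = −∂_β V(α,β)`
    (heomβ : ∀ t ∈ I, deriv (deriv β) t =
        -(deriv (fun b => (1/2) * ω ((α t)^2 + b^2) + ((α t)^2)⁻¹ * J (b / α t)) (β t))) :
    ∀ t₁ ∈ I, ∀ t₂ ∈ I,
      (1/2) * (deriv α t₁ * β t₁ - α t₁ * deriv β t₁)^2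
        + (((α t₁)^2 + (β t₁)^2) / (α t₁)^2) * J (β t₁ / α t₁) =
      (1/2) * (deriv α t₂ * β t₂ - α t₂ * deriv β t₂)^2
        + (((α t₂)^2 + (β t₂)^2) / (α t₂)^2) * J (β t₂ / α t₂) := by
  have hωd := hω.differentiable one_ne_zero
  have hJd := hJ.differentiable one_ne_zero
  intro t₁ h₁ t₂ h₂
  refine hIconn.eq_of_hasDerivAt_eq_zero
    (f := fun t => rayReidInvariant J (α t) (β t) (deriv α t) (deriv β t)) (fun t ht => ?_) h₁ h₂
  have hVα := hasDerivAt_ermakovPotential_fst (hωd (α t ^ 2 + β t ^ 2)).hasDerivAt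
    (hJd (β t / α t)).hasDerivAt (hα0 t ht)
  have hVβ := hasDerivAt_ermakovPotential_snd (hωd (α t ^ 2 + β t ^ 2)).hasDerivAt
    (hJd (β t / α t)).hasDerivAt
  refine hasDerivAt_rayReidInvariant_eq_zero (ω' := deriv ω (α t ^ 2 + β t ^ 2))
    (hα t ht).hasDerivAt (hβ t ht).hasDerivAt ?_ ?_ (hJd _).hasDerivAt (hα0 t ht)
  · refine (hα' t ht).hasDerivAt.congr_deriv ?_
    rw [heomα t ht]
    exact congrArg Neg.neg hVα.deriv
  · refine (hβ' t ht).hasDerivAt.congr_deriv ?_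
    rw [heomβ t ht]
    exact congrArg Neg.neg hVβ.deriv

/-- **Ray–Reid invariant.** For the Ermakov–Ray–Reid system with potential
`V(α,β) = (1/2) ω(α²+β²) + α⁻² J(β/α)` and equations of motion `α̈ = −∂_α V`, `β̈ = −∂_β V`,
the quantity `I = (1/2)(α̇β − αβ̇)² + ((α²+β²)/α²) J(β/α)` is conserved. -/
theorem ray_reid_invariant (ω J : ℝ → ℝ) (hω : ContDiff ℝ 1 ω) (hJ : ContDiff ℝ 1 J)
    (I : Set ℝ) (hI : IsOpen I) (hIconn : I.OrdConnected)
    (α β : ℝ → ℝ)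
    (hα : ∀ t ∈ I, DifferentiableAt ℝ α t) (hα' : ∀ t ∈ I, DifferentiableAt ℝ (deriv α) t)
    (hβ : ∀ t ∈ I, DifferentiableAt ℝ β t) (hβ' : ∀ t ∈ I, DifferentiableAt ℝ (deriv β) t)
    (hα0 : ∀ t ∈ I, α t ≠ 0)
    -- `α̈ = −∂_α V(α,β)`
    (heomα : ∀ t ∈ I, deriv (deriv α) t =
        -(deriv (fun a => (1/2) * ω (a^2 + (β t)^2) + (a^2)⁻¹ * J (β t / a)) (α t)))
    -- `β̈ = −∂_β V(α,β)`
    (heomβ : ∀ t ∈ I, deriv (deriv β) t =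
        -(deriv (fun b => (1/2) * ω ((α t)^2 + b^2) + ((α t)^2)⁻¹ * J (b / α t)) (β t))) :
    ∀ t₁ ∈ I, ∀ t₂ ∈ I,
      (1/2) * (deriv α t₁ * β t₁ - α t₁ * deriv β t₁)^2
        + (((α t₁)^2 + (β t₁)^2) / (α t₁)^2) * J (β t₁ / α t₁) =
      (1/2) * (deriv α t₂ * β t₂ - α t₂ * deriv β t₂)^2
        + (((α t₂)^2 + (β t₂)^2) / (α t₂)^2) * J (β t₂ / α t₂) :=
  ray_reid_invariant_general ω J hω hJ I hIconn α β hα hα' hβ hβ' hα0 heomα heomβ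
end

section
/- Let ω, J : ℝ → ℝ be functions, and let α ≠ 0, β, α̇, β̇ be real numbers. Write w = β/α, u = α² + β², and suppose D = 2 J(w) + α² ω(u) ≠ 0 and that the Hamiltonian constraint (1/2)(α̇² + β̇²) + (1/2) ω(u) + α^{−2} J(w) = 0 holds. Then the quadratic quantity Q₁ = (2(α α̇ + β β̇)² J(w) − α² (α̇ β − α β̇)² ω(u)) / D equals −2 I, where I = (1/2)(α̇ β − α β̇)² + ((α² + β²)/α²) J(w) is the Ray–Reid invariant. -/
/-!
Lagrange's identity `(αα̇ + ββ̇)² + (α̇β − αβ̇)² = (α² + β²)(α̇² + β̇²)` splits the kinetic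
energy into a radial and an angular part, and on the constraint surface the total
`α̇² + β̇²` equals `−ω(u) − 2J(w)/α²`. Eliminating the radial part from the numerator of `Q₁`
leaves `−D` times `(α̇β − αβ̇)² + 2(u/α²)J(w) = 2I`, and `D ≠ 0` cancels.
-/

theorem Q1_numerator_eq_of_hamiltonian_constraint {K : Type*} [Field K] [CharZero K]
    {α β α' β' j o : K} (hα : α ≠ 0)
    (h : (1/2) * (α'^2 + β'^2) + (1/2) * o + (α^2)⁻¹ * j = 0) :
    2 * (α * α' + β * β')^2 * j - α^2 * (α' * β - α * β')^2 * o =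
      -(2 * j + α^2 * o) * ((α' * β - α * β')^2 + 2 * ((α^2 + β^2) / α^2) * j) := by
  have hkinetic : α'^2 + β'^2 = -(o + 2 * j / α^2) := by linear_combination 2 * h
  have hlagrange : (α * α' + β * β')^2 + (α' * β - α * β')^2 = (α^2 + β^2) * (α'^2 + β'^2) := by
    linear_combination (sq_add_sq_mul_sq_add_sq (x₁ := α) (x₂ := β) (y₁ := α') (y₂ := -β')).symm
  rw [hkinetic] at hlagrange
  field_simp at hlagrange ⊢
  linear_combination 2 * j * hlagrange

/-- On the constraint surface of the Ermakov–Ray–Reid system, with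
`w = β/α`, `u = α² + β²` and `D = 2J(w) + α²ω(u) ≠ 0`, the quadratic quantity
`Q₁ = (2(αα̇ + ββ̇)² J(w) − α²(α̇β − αβ̇)² ω(u)) / D` equals `−2I`, where
`I = (1/2)(α̇β − αβ̇)² + ((α²+β²)/α²) J(w)` is the Ray–Reid invariant. -/
theorem Q1_eq_neg_two_ray_reid_invariant (ω J : ℝ → ℝ) (α β α' β' : ℝ)
    (hα : α ≠ 0)
    (hD : 2 * J (β / α) + α^2 * ω (α^2 + β^2) ≠ 0)
    -- Hamiltonian constraint
    (hconstraint : (1/2) * (α'^2 + β'^2) + (1/2) * ω (α^2 + β^2)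
        + (α^2)⁻¹ * J (β / α) = 0) :
    (2 * (α * α' + β * β')^2 * J (β / α) - α^2 * (α' * β - α * β')^2 * ω (α^2 + β^2))
        / (2 * J (β / α) + α^2 * ω (α^2 + β^2)) =
      -2 * ((1/2) * (α' * β - α * β')^2 + ((α^2 + β^2) / α^2) * J (β / α)) := by
  rw [div_eq_iff hD, Q1_numerator_eq_of_hamiltonian_constraint hα hconstraint]
  ring
end
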